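/- arXiv:2506.06835 — 7 statements merged into one kernel-verified Lean document; each statement's English description precedes it below -/
import Mathlib

section
/- Let n ≥ 1 and let a, b, c, d ∈ {1,…,n} be pairwise distinct. Then (H_{c,d}·H_{a,c}·H_{b,d})⁴ = H_{a,b}·H_{c,d} as n×n real matrices. -/
open Matrix

noncomputable section

/-- `Z_a`: identity matrix except entry `(a,a)` is `-1`. -/
def Zmat (n : ℕ) (a : Fin n) : Matrix (Fin n) (Fin n) ℝ :=
  fun i j => if i = j then (if i = a then -1 else 1) else 0

/-- `X_{b,c}`: the permutation matrix exchanging the `b`-th and `c`-th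
standard basis vectors. -/
def Xmat (n : ℕ) (b c : Fin n) : Matrix (Fin n) (Fin n) ℝ :=
  fun i j => if j = Equiv.swap b c i then 1 else 0

/-- `H_{b,c}`: identity except entries `(b,b), (b,c), (c,b)` equal `1/√2`
and entry `(c,c)` equals `-1/√2`. -/
def Hmat (n : ℕ) (b c : Fin n) : Matrix (Fin n) (Fin n) ℝ :=
  fun i j =>
    if i = b ∧ j = b then 1 / Real.sqrt 2
    else if i = b ∧ j = c then 1 / Real.sqrt 2
    else if i = c ∧ j = b then 1 / Real.sqrt 2
    else if i = c ∧ j = c then -(1 / Real.sqrt 2)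
    else if i = j then 1 else 0

/-- Generators of `𝒢_n`. -/
inductive Gen (n : ℕ) : Type
  | Z : Fin n → Gen n
  | X : (b c : Fin n) → b ≠ c → Gen n
  | H : (b c : Fin n) → b ≠ c → Gen n

/-- Semantics of a generator. -/
def gsem {n : ℕ} : Gen n → Matrix (Fin n) (Fin n) ℝ
  | Gen.Z a => Zmat n a
  | Gen.X b c _ => Xmat n b c
  | Gen.H b c _ => Hmat n b c

/-- Semantics of a word (rightmost generator acts first). -/
def wsem {n : ℕ} : List (Gen n) → Matrix (Fin n) (Fin n) ℝ
  | [] => 1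
  | g :: w => gsem g * wsem w

/-- The smallest congruence `≈` on words over `𝒢_n` containing the relations
(a1)-(d4), (e1), (e2) of the paper. -/
inductive WRel (n : ℕ) : List (Gen n) → List (Gen n) → Prop
  | rel_zz (a : Fin n) : WRel n [Gen.Z a, Gen.Z a] []
  | rel_xx (a b : Fin n) (hab : a ≠ b) : WRel n [Gen.X a b hab, Gen.X a b hab] []
  | rel_hh (a b : Fin n) (hab : a ≠ b) : WRel n [Gen.H a b hab, Gen.H a b hab] []
  | rel_zz_comm (a b : Fin n) (hab : a ≠ b) : WRel n [Gen.Z a, Gen.Z b] [Gen.Z b, Gen.Z a]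
  | rel_zx_comm (a b c : Fin n) (hab : a ≠ b) (hac : a ≠ c) (hbc : b ≠ c) :
      WRel n [Gen.Z a, Gen.X b c hbc] [Gen.X b c hbc, Gen.Z a]
  | rel_xx_comm (a b c d : Fin n) (hab : a ≠ b) (hac : a ≠ c) (had : a ≠ d)
      (hbc : b ≠ c) (hbd : b ≠ d) (hcd : c ≠ d) :
      WRel n [Gen.X a b hab, Gen.X c d hcd] [Gen.X c d hcd, Gen.X a b hab]
  | rel_zh_comm (a b c : Fin n) (hab : a ≠ b) (hac : a ≠ c) (hbc : b ≠ c) :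
      WRel n [Gen.Z a, Gen.H b c hbc] [Gen.H b c hbc, Gen.Z a]
  | rel_xh_comm (a b c d : Fin n) (hab : a ≠ b) (hac : a ≠ c) (had : a ≠ d)
      (hbc : b ≠ c) (hbd : b ≠ d) (hcd : c ≠ d) :
      WRel n [Gen.X a b hab, Gen.H c d hcd] [Gen.H c d hcd, Gen.X a b hab]
  | rel_hh_comm (a b c d : Fin n) (hab : a ≠ b) (hac : a ≠ c) (had : a ≠ d)
      (hbc : b ≠ c) (hbd : b ≠ d) (hcd : c ≠ d) :
      WRel n [Gen.H a b hab, Gen.H c d hcd] [Gen.H c d hcd, Gen.H a b hab]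
  | rel_zx (a b : Fin n) (hab : a ≠ b) :
      WRel n [Gen.Z a, Gen.X a b hab] [Gen.X a b hab, Gen.Z b]
  | rel_xc2 (a b c : Fin n) (hab : a ≠ b) (hac : a ≠ c) (hbc : b ≠ c) :
      WRel n [Gen.X b c hbc, Gen.X a b hab] [Gen.X a b hab, Gen.X a c hac]
  | rel_xc3 (a b c : Fin n) (hab : a ≠ b) (hac : a ≠ c) (hbc : b ≠ c) :
      WRel n [Gen.X a c hac, Gen.X b c hbc] [Gen.X b c hbc, Gen.X a b hab]
  | rel_hx4 (a b c : Fin n) (hab : a ≠ b) (hac : a ≠ c) (hbc : b ≠ c) :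
      WRel n [Gen.H b c hbc, Gen.X a b hab] [Gen.X a b hab, Gen.H a c hac]
  | rel_hx5 (a b c : Fin n) (hab : a ≠ b) (hac : a ≠ c) (hbc : b ≠ c) :
      WRel n [Gen.H a c hac, Gen.X b c hbc] [Gen.X b c hbc, Gen.H a b hab]
  | rel_zzh (a b : Fin n) (hab : a ≠ b) :
      WRel n [Gen.Z a, Gen.Z b, Gen.H a b hab] [Gen.H a b hab, Gen.Z a, Gen.Z b]
  | rel_zh (a b : Fin n) (hab : a ≠ b) :
      WRel n [Gen.Z b, Gen.H a b hab] [Gen.H a b hab, Gen.X a b hab]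
  | rel_d3 (a b c d : Fin n) (hab : a ≠ b) (hac : a ≠ c) (had : a ≠ d)
      (hbc : b ≠ c) (hbd : b ≠ d) (hcd : c ≠ d) :
      WRel n
        ([Gen.H c d hcd, Gen.H a c hac, Gen.H b d hbd] ++
         [Gen.H c d hcd, Gen.H a c hac, Gen.H b d hbd] ++
         [Gen.H c d hcd, Gen.H a c hac, Gen.H b d hbd] ++
         [Gen.H c d hcd, Gen.H a c hac, Gen.H b d hbd])
        [Gen.H a b hab, Gen.H c d hcd]
  | rel_d4 (a b c d e f : Fin n) (hab : a ≠ b) (hac : a ≠ c) (had : a ≠ d)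
      (hae : a ≠ e) (haf : a ≠ f) (hbc : b ≠ c) (hbd : b ≠ d) (hbe : b ≠ e)
      (hbf : b ≠ f) (hcd : c ≠ d) (hce : c ≠ e) (hcf : c ≠ f) (hde : d ≠ e)
      (hdf : d ≠ f) (hef : e ≠ f) :
      WRel n
        ([Gen.H a c hac, Gen.H b d hbd, Gen.H a b hab, Gen.H a c hac,
          Gen.H b d hbd, Gen.X c e hce, Gen.X d f hdf] ++
         [Gen.H a c hac, Gen.H b d hbd, Gen.H a b hab, Gen.H a c hac,
          Gen.H b d hbd, Gen.X c e hce, Gen.X d f hdf] ++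
         [Gen.H a c hac, Gen.H b d hbd, Gen.H a b hab, Gen.H a c hac,
          Gen.H b d hbd, Gen.X c e hce, Gen.X d f hdf])
        [Gen.H c e hce, Gen.H d f hdf, Gen.H e f hef, Gen.H c e hce,
         Gen.H d f hdf, Gen.X c e hce, Gen.X d f hdf]
  | rel_x_swap (b c : Fin n) (hbc : b ≠ c) :
      WRel n [Gen.X c b (Ne.symm hbc)] [Gen.X b c hbc]
  | rel_h_swap (b c : Fin n) (hbc : b ≠ c) :
      WRel n [Gen.H c b (Ne.symm hbc)] [Gen.X b c hbc, Gen.H b c hbc, Gen.X b c hbc]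
  | refl (w : List (Gen n)) : WRel n w w
  | symm {u v : List (Gen n)} : WRel n u v → WRel n v u
  | trans {u v w : List (Gen n)} : WRel n u v → WRel n v w → WRel n u w
  | append_left (w : List (Gen n)) {u v : List (Gen n)} :
      WRel n u v → WRel n (w ++ u) (w ++ v)
  | append_right (w : List (Gen n)) {u v : List (Gen n)} :
      WRel n u v → WRel n (u ++ w) (v ++ w)

/-- Membership in the ring `ℤ[√2] ⊆ ℝ`. -/
def inZsqrt2 (x : ℝ) : Prop := ∃ a b : ℤ, x = (a : ℝ) + (b : ℝ) * Real.sqrt 2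

/-- Membership in the ring `ℤ[1/√2] ⊆ ℝ`. -/
def inZinvsqrt2 (x : ℝ) : Prop := ∃ k : ℕ, inZsqrt2 (Real.sqrt 2 ^ k * x)

/-- `u ≡ v (mod 2)`, i.e. `(u - v)/2 ∈ ℤ[√2]`. -/
def cong2 (u v : ℝ) : Prop := inZsqrt2 ((u - v) / 2)

/-- Least denominator exponent of a scalar. -/
def lde (x : ℝ) : ℕ := sInf {k : ℕ | inZsqrt2 (Real.sqrt 2 ^ k * x)}

/-- Least denominator exponent of a vector. -/
def ldeVec {m : ℕ} (v : Fin m → ℝ) : ℕ :=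
  sInf {k : ℕ | ∀ i, inZsqrt2 (Real.sqrt 2 ^ k * v i)}

/-- The largest (1-based) index `j` such that the `j`-th column of `M` differs
from the `j`-th standard basis vector (`0` if `M` is the identity). -/
def levelJ {n : ℕ} (M : Matrix (Fin n) (Fin n) ℝ) : ℕ :=
  sSup {m : ℕ | ∃ i : Fin n, m = (i : ℕ) + 1 ∧
    ∃ r : Fin n, M r i ≠ (if r = i then (1 : ℝ) else 0)}

/-- The `levelJ M`-th column of `M` (junk if `n = 0`). -/
def levelCol {n : ℕ} (M : Matrix (Fin n) (Fin n) ℝ) : Fin n → ℝ :=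
  fun r => if h : levelJ M - 1 < n then M r ⟨levelJ M - 1, h⟩ else 0

/-- The level `(j, k, l)` of a matrix, as an element of `ℕ ×ₗ (ℕ ×ₗ ℕ)`
(lexicographic order). -/
def level {n : ℕ} (M : Matrix (Fin n) (Fin n) ℝ) : ℕ ×ₗ (ℕ ×ₗ ℕ) :=
  if levelJ M = 0 then toLex (0, toLex (0, 0))
  else if ldeVec (levelCol M) = 0 then toLex (levelJ M, toLex (0, 0))
  else
    toLex (levelJ M, toLex (ldeVec (levelCol M),
      Nat.card {i : Fin n //
        cong2 (Real.sqrt 2 ^ ldeVec (levelCol M) * levelCol M i) 1 ∨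
        cong2 (Real.sqrt 2 ^ ldeVec (levelCol M) * levelCol M i) (1 + Real.sqrt 2)}))

/-- The level of the sequence of intermediate states obtained by applying the
generators of a word (rightmost first) to a state `s`: the maximum of the
levels of all intermediate states. -/
def seqLevel {n : ℕ} : List (Gen n) → Matrix (Fin n) (Fin n) ℝ → ℕ ×ₗ (ℕ ×ₗ ℕ)
  | [], s => level s
  | g :: w, s => max (level (gsem g * (wsem w * s))) (seqLevel w s)

/-- The basic generators `𝒢'_n = {X_{1,x} : 2 ≤ x ≤ n} ∪ {Z_1, H_{1,2}}`
(written with 1-based indices). -/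
def Gen.isBasic {n : ℕ} : Gen n → Prop
  | Gen.Z a => (a : ℕ) = 0
  | Gen.X b _ _ => (b : ℕ) = 0
  | Gen.H b c _ => (b : ℕ) = 0 ∧ (c : ℕ) = 1

/-- A generator with ordered indices (`b < c` for `X_{b,c}` and `H_{b,c}`). -/
def Gen.ordered {n : ℕ} : Gen n → Prop
  | Gen.Z _ => True
  | Gen.X b c _ => b < c
  | Gen.H b c _ => b < c


/-! On vectors, `H_{b,c}` replaces the pair `(v_b, v_c)` by `((v_b + v_c)/√2, (v_b - v_c)/√2)` and
fixes every other coordinate. So both sides of the identity act only on the coordinates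
`a, b, c, d`, and one round of `H_{c,d} H_{a,c} H_{b,d}` has an explicit linear formula there.
Iterating it four times and comparing with `H_{a,b} H_{c,d}` coordinatewise is a polynomial
identity that only needs `√2 ^ 2 = 2`. -/

section
variable {n : ℕ} {a b c d : Fin n}

theorem Hmat_mulVec (hbc : b ≠ c) (v : Fin n → ℝ) :
    Hmat n b c *ᵥ v =
      Function.update (Function.update v b ((v b + v c) / √2)) c ((v b - v c) / √2) := by
  funext i
  simp only [mulVec, dotProduct]
  by_cases hi : i = b ∨ i = c
  · rw [Fintype.sum_eq_add b c hbc fun j hj => by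
      rcases hi with rfl | rfl <;> simp [Hmat, hj.1, hj.2, Ne.symm hj.1, Ne.symm hj.2]]
    rcases hi with rfl | rfl <;>
      simp only [Hmat, hbc, hbc.symm, and_self, and_true, and_false, ↓reduceIte, ne_eq,
        not_false_eq_true, Function.update_of_ne, Function.update_self] <;>
      ring
  · push Not at hi
    rw [Fintype.sum_eq_single i fun j hj => by simp [Hmat, hi.1, hi.2, Ne.symm hj]]
    simp [Hmat, hi.1, hi.2]

theorem Hmat_mul_Hmat_mul_Hmat_mulVec (hab : a ≠ b) (hac : a ≠ c) (had : a ≠ d)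
    (hbc : b ≠ c) (hbd : b ≠ d) (hcd : c ≠ d) (v : Fin n → ℝ) :
    (Hmat n c d * Hmat n a c * Hmat n b d) *ᵥ v =
      Function.update (Function.update (Function.update (Function.update v
        a ((v a + v c) / √2)) b ((v b + v d) / √2))
        c ((v a + v b - v c - v d) / 2)) d ((v a - v b - v c + v d) / 2) := by
  rw [← mulVec_mulVec, ← mulVec_mulVec, Hmat_mulVec hbd, Hmat_mulVec hac, Hmat_mulVec hcd]
  funext i
  simp only [Function.update_apply]
  split_ifs <;> grind [Real.sq_sqrt]

end

theorem d3_matrix_general (n : ℕ) (a b c d : Fin n)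
    (hab : a ≠ b) (hac : a ≠ c) (had : a ≠ d)
    (hbc : b ≠ c) (hbd : b ≠ d) (hcd : c ≠ d) :
    (Hmat n c d * Hmat n a c * Hmat n b d) ^ 4 = Hmat n a b * Hmat n c d := by
  refine ext_iff_mulVec.mpr fun v => ?_
  simp only [pow_succ, pow_zero, one_mul, ← mulVec_mulVec,
    Hmat_mul_Hmat_mul_Hmat_mulVec hab hac had hbc hbd hcd]
  rw [Hmat_mulVec hcd, Hmat_mulVec hab]
  funext i
  by_cases hi : i = a ∨ i = b ∨ i = c ∨ i = d
  · rcases hi with rfl | rfl | rfl | rfl <;>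
      simp only [Function.update_self, Function.update_of_ne, ne_eq, not_false_eq_true,
        hab, hac, had, hbc, hbd, hcd, hac.symm, had.symm, hbc.symm, hbd.symm] <;>
      grind [Real.sq_sqrt]
  · push Not at hi
    simp [hi.1, hi.2.1, hi.2.2.1, hi.2.2.2]

theorem d3_matrix (n : ℕ) (hn : 1 ≤ n) (a b c d : Fin n)
    (hab : a ≠ b) (hac : a ≠ c) (had : a ≠ d)
    (hbc : b ≠ c) (hbd : b ≠ d) (hcd : c ≠ d) :
    (Hmat n c d * Hmat n a c * Hmat n b d) ^ 4 = Hmat n a b * Hmat n c d :=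
  d3_matrix_general n a b c d hab hac had hbc hbd hcd
end
end

section
/- Let n ≥ 1 and let a, b, c, d, e, f ∈ {1,…,n} be pairwise distinct. Then (H_{a,c}·H_{b,d}·H_{a,b}·H_{a,c}·H_{b,d}·X_{c,e}·X_{d,f})³ = H_{c,e}·H_{d,f}·H_{e,f}·H_{c,e}·H_{d,f}·X_{c,e}·X_{d,f} as n×n real matrices. -/
open Matrix

noncomputable section

/-!
Relabel `a, b, c, d, e, f` as the pairs `(0,0), (0,1), (1,0), (1,1), (2,0), (2,1)` of
`Fin 3 × Fin 2`. Every factor is the identity off these six coordinates, so it suffices to prove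
the identity in `Matrix (Fin 3 × Fin 2) (Fin 3 × Fin 2) ℝ`. Let `H` be the `2 × 2` Hadamard
matrix and `P` the projection onto its `+1`-eigenspace. Then
`(M, M') ↦ M ⊗ₖ P + M' ⊗ₖ (1 - P)` is a ring homomorphism from pairs of `3 × 3` matrices,
`H_{a,c} H_{b,d}` and `X_{c,e} X_{d,f}` are the images of `(H_{0,1}, H_{0,1})` and
`(X_{1,2}, X_{1,2})`, and `H_{a,b}`, `H_{e,f}` those of `(1, Z_0)`, `(1, Z_2)`. So the identity
falls apart into `X_{1,2}³ = X_{1,2}` and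
`(H_{0,1} Z_0 H_{0,1} X_{1,2})³ = 1 = H_{1,2} Z_2 H_{1,2} X_{1,2}`; the matrix cubed on the left
is a signed `3`-cycle.
-/

open scoped Kronecker

namespace Function.Embedding

variable {ι κ : Type*} [Fintype ι] [DecidableEq κ] (g : ι ↪ κ)

def sumComplRange : ι ⊕ {j // j ∉ Set.range g} ≃ κ :=
  (Equiv.sumCongr (Equiv.ofInjective g g.injective) (Equiv.refl _)).trans
    (Equiv.sumCompl (· ∈ Set.range g))

@[simp] lemma sumComplRange_symm_apply (x : ι) : g.sumComplRange.symm (g x) = Sum.inl x := by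
  simp [sumComplRange]

lemma sumComplRange_symm_apply_of_notMem {j : κ} (hj : j ∉ Set.range g) :
    g.sumComplRange.symm j = Sum.inr ⟨j, hj⟩ := by
  simp [sumComplRange, Equiv.sumCompl_symm_apply_of_neg hj]

end Function.Embedding

namespace Matrix

section ExtendId

variable {ι κ R : Type*} [Fintype ι] [DecidableEq ι] [Fintype κ] [DecidableEq κ] [Semiring R]
  (g : ι ↪ κ)

def extendId : Matrix ι ι R →* Matrix κ κ R where
  toFun M := (fromBlocks M 0 0 1).submatrix g.sumComplRange.symm g.sumComplRange.symm
  map_one' := by simp [fromBlocks_one, submatrix_one_equiv]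
  map_mul' M N := by simp [submatrix_mul_equiv, fromBlocks_multiply]

lemma extendId_eq_of_apply {M : Matrix ι ι R} {N : Matrix κ κ R}
    (hrange : ∀ x y, N (g x) (g y) = M x y)
    (hcompl : ∀ i j, i ∉ Set.range g ∨ j ∉ Set.range g →
      N i j = (1 : Matrix κ κ R) i j) :
    extendId g M = N := by
  ext i j
  rcases em (i ∈ Set.range g) with ⟨x, rfl⟩ | hi <;>
    rcases em (j ∈ Set.range g) with ⟨y, rfl⟩ | hj
  · simp [extendId, hrange]
  · have hxj : g x ≠ j := fun h => hj ⟨x, h⟩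
    rw [hcompl _ _ (.inr hj)]
    simp [extendId, g.sumComplRange_symm_apply_of_notMem hj, hxj]
  · have hiy : i ≠ g y := fun h => hi ⟨y, h.symm⟩
    rw [hcompl _ _ (.inl hi)]
    simp [extendId, g.sumComplRange_symm_apply_of_notMem hi, hiy]
  · rw [hcompl _ _ (.inl hi)]
    simp [extendId, g.sumComplRange_symm_apply_of_notMem hi,
      g.sumComplRange_symm_apply_of_notMem hj, one_apply]

end ExtendId

section KroneckerSplit

variable {m k R : Type*} [Fintype m] [DecidableEq m] [Fintype k] [DecidableEq k] [CommRing R]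

def kroneckerSplit (p : Matrix k k R) (hp : IsIdempotentElem p) :
    Matrix m m R × Matrix m m R →+* Matrix (m × k) (m × k) R where
  toFun M := M.1 ⊗ₖ p + M.2 ⊗ₖ (1 - p)
  map_one' := by
    rw [Prod.fst_one, Prod.snd_one, ← kronecker_add, add_sub_cancel, one_kronecker_one]
  map_mul' M N := by
    simp only [Prod.fst_mul, Prod.snd_mul, add_mul, mul_add, ← mul_kronecker_mul, hp.eq,
      hp.one_sub.eq, hp.mul_one_sub_self, hp.one_sub_mul_self, kronecker_zero, add_zero, zero_add]
  map_zero' := by simp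
  map_add' M N := by simp only [Prod.fst_add, Prod.snd_add, add_kronecker]; abel

@[simp] lemma kroneckerSplit_apply (p : Matrix k k R) (hp : IsIdempotentElem p)
    (M : Matrix m m R × Matrix m m R) :
    kroneckerSplit p hp M = M.1 ⊗ₖ p + M.2 ⊗ₖ (1 - p) := rfl

lemma kroneckerSplit_self (p : Matrix k k R) (hp : IsIdempotentElem p) (M : Matrix m m R) :
    kroneckerSplit p hp (M, M) = M ⊗ₖ 1 := by
  rw [kroneckerSplit_apply, ← kronecker_add, add_sub_cancel]

lemma isIdempotentElem_single_one (l : k) : IsIdempotentElem (single l l (1 : R)) := by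
  rw [IsIdempotentElem, single_mul_single_same, mul_one]

lemma extendId_sectL (l : k) (M : Matrix m m R) :
    extendId (Function.Embedding.sectL m l) M =
      kroneckerSplit (single l l 1) (isIdempotentElem_single_one l) (M, 1) := by
  refine extendId_eq_of_apply _ (fun x y => by simp) ?_
  rintro ⟨i, s⟩ ⟨j, t⟩ h
  have hzero : single l l (1 : R) s t = 0 := by
    rw [single_apply_of_ne]
    rintro ⟨hs, ht⟩
    rcases h with h | h
    · exact h ⟨i, by simp [hs]⟩
    · exact h ⟨j, by simp [ht]⟩
  rcases eq_or_ne s t with rfl | hst <;> simp [one_apply, *]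

lemma extendId_sectL_zero_mul_extendId_sectL_one (M : Matrix m m R) :
    extendId (Function.Embedding.sectL m (0 : Fin 2)) M *
      extendId (Function.Embedding.sectL m (1 : Fin 2)) M = M ⊗ₖ 1 := by
  have hsingle : single (1 : Fin 2) (1 : Fin 2) (1 : R) = 1 - single 0 0 1 := by
    ext i j; fin_cases i <;> fin_cases j <;> simp
  have hp := isIdempotentElem_single_one (R := R) (0 : Fin 2)
  have hsectL_one :
      extendId (Function.Embedding.sectL m (1 : Fin 2)) M = kroneckerSplit _ hp (1, M) := by
    rw [extendId_sectL, kroneckerSplit_apply, kroneckerSplit_apply, hsingle, sub_sub_cancel,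
      add_comm]
  rw [extendId_sectL, hsectL_one, ← map_mul, Prod.mk_mul_mk, mul_one, one_mul,
    kroneckerSplit_self]

end KroneckerSplit

end Matrix

lemma isIdempotentElem_half_smul_one_add {A : Type*} [Ring A] [Algebra ℝ A] {u : A}
    (hu : u * u = 1) : IsIdempotentElem ((2⁻¹ : ℝ) • (1 + u)) := by
  rw [IsIdempotentElem, smul_mul_smul, add_mul, mul_add, mul_add, hu]
  simp only [one_mul, mul_one]
  module

section TwoLevel

variable {ι κ : Type*} [DecidableEq ι]

def hadamardOn (x y : ι) : Matrix ι ι ℝ :=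
  fun i j =>
    if i = x ∧ j = x then 1 / Real.sqrt 2
    else if i = x ∧ j = y then 1 / Real.sqrt 2
    else if i = y ∧ j = x then 1 / Real.sqrt 2
    else if i = y ∧ j = y then -(1 / Real.sqrt 2)
    else if i = j then 1 else 0

lemma Hmat_eq_hadamardOn (n : ℕ) (b c : Fin n) : Hmat n b c = hadamardOn b c := rfl

lemma Xmat_eq_permMatrix_swap (n : ℕ) (b c : Fin n) :
    Xmat n b c = (Equiv.swap b c).permMatrix ℝ := by
  ext i j
  simp [Xmat, PEquiv.toMatrix_apply, eq_comm]

variable [Fintype ι]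

lemma permMatrix_swap_mul_self {R : Type*} [Semiring R] (x y : ι) :
    (Equiv.swap x y).permMatrix R * (Equiv.swap x y).permMatrix R = 1 := by
  rw [← permMatrix_mul, Equiv.swap_mul_self, permMatrix_one]

variable [Fintype κ] [DecidableEq κ] (g : ι ↪ κ)

lemma extendId_hadamardOn (x y : ι) :
    extendId g (hadamardOn x y) = hadamardOn (g x) (g y) := by
  refine extendId_eq_of_apply g (fun _ _ => by simp only [hadamardOn, g.injective.eq_iff]) ?_
  rintro i j (hi | hj)
  · have hx : i ≠ g x := fun h => hi ⟨x, h.symm⟩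
    have hy : i ≠ g y := fun h => hi ⟨y, h.symm⟩
    simp [hadamardOn, one_apply, hx, hy]
  · have hx : j ≠ g x := fun h => hj ⟨x, h.symm⟩
    have hy : j ≠ g y := fun h => hj ⟨y, h.symm⟩
    simp [hadamardOn, one_apply, hx, hy]

lemma extendId_permMatrix_swap {R : Type*} [Semiring R] (x y : ι) :
    extendId g ((Equiv.swap x y).permMatrix R) = (Equiv.swap (g x) (g y)).permMatrix R := by
  refine extendId_eq_of_apply g (fun _ _ => by simp [PEquiv.toMatrix_apply, g.swap_apply]) ?_
  rintro i j (hi | hj)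
  · have hx : i ≠ g x := fun h => hi ⟨x, h.symm⟩
    have hy : i ≠ g y := fun h => hi ⟨y, h.symm⟩
    simp [PEquiv.toMatrix_apply, one_apply, Equiv.swap_apply_of_ne_of_ne hx hy]
  · have hx : j ≠ g x := fun h => hj ⟨x, h.symm⟩
    have hy : j ≠ g y := fun h => hj ⟨y, h.symm⟩
    simp [PEquiv.toMatrix_apply, one_apply, Equiv.swap_apply_eq_iff,
      Equiv.swap_apply_of_ne_of_ne hx hy]

end TwoLevel

lemma hadamardOn_zero_one_mul_self : hadamardOn (0 : Fin 2) 1 * hadamardOn 0 1 = 1 := by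
  have h2 : Real.sqrt 2 * Real.sqrt 2 = 2 := Real.mul_self_sqrt (by norm_num)
  ext i j
  fin_cases i <;> fin_cases j <;>
    simp [mul_apply, Fin.sum_univ_two, hadamardOn] <;> field_simp <;> linarith

lemma hadamardOn_mul_self {ι : Type*} [Fintype ι] [DecidableEq ι] {x y : ι} (hxy : x ≠ y) :
    hadamardOn x y * hadamardOn x y = 1 := by
  let g : Fin 2 ↪ ι := ⟨![x, y], by
    intro i j h; fin_cases i <;> fin_cases j <;> simp_all [eq_comm]⟩
  have hg : extendId g (hadamardOn 0 1) = hadamardOn x y := extendId_hadamardOn g 0 1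
  rw [← hg, ← map_mul, hadamardOn_zero_one_mul_self, map_one]

def hadamardProj : Matrix (Fin 2) (Fin 2) ℝ := (2⁻¹ : ℝ) • (1 + hadamardOn 0 1)

lemma isIdempotentElem_hadamardProj : IsIdempotentElem hadamardProj :=
  isIdempotentElem_half_smul_one_add hadamardOn_zero_one_mul_self

section ProdFinTwo

variable {m : Type*} [Fintype m] [DecidableEq m]

lemma hadamardOn_mk_zero_mul_hadamardOn_mk_one (i j : m) :
    hadamardOn ((i, 0) : m × Fin 2) (j, 0) * hadamardOn (i, 1) (j, 1) =
      hadamardOn i j ⊗ₖ 1 := by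
  rw [← extendId_sectL_zero_mul_extendId_sectL_one, extendId_hadamardOn, extendId_hadamardOn]
  rfl

lemma permMatrix_swap_mk_zero_mul_permMatrix_swap_mk_one {R : Type*} [CommRing R] (i j : m) :
    (Equiv.swap ((i, 0) : m × Fin 2) (j, 0)).permMatrix R *
        (Equiv.swap (i, 1) (j, 1)).permMatrix R =
      (Equiv.swap i j).permMatrix R ⊗ₖ 1 := by
  rw [← extendId_sectL_zero_mul_extendId_sectL_one, extendId_permMatrix_swap,
    extendId_permMatrix_swap]
  rfl

end ProdFinTwo

lemma hadamardOn_mk_zero_mk_one {n : ℕ} (i : Fin n) :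
    hadamardOn ((i, 0) : Fin n × Fin 2) (i, 1) =
      kroneckerSplit hadamardProj isIdempotentElem_hadamardProj (1, Zmat n i) := by
  have h2 : Real.sqrt 2 * Real.sqrt 2 = 2 := Real.mul_self_sqrt (by norm_num)
  ext ⟨r, s⟩ ⟨t, u⟩
  rcases eq_or_ne r t with rfl | hrt
  · by_cases hr : r = i
    · subst hr
      fin_cases s <;> fin_cases u <;> simp [hadamardOn, hadamardProj, Zmat] <;>
        field_simp <;> ring
    · fin_cases s <;> fin_cases u <;> simp [hadamardOn, hadamardProj, Zmat, hr]
  · rcases eq_or_ne r i with rfl | hr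
    · simp [hadamardOn, Zmat, one_apply, hrt, Ne.symm hrt]
    · simp [hadamardOn, Zmat, one_apply, hrt, hr]

lemma hadamardOn_zero_one_conj_Zmat_mul_swap :
    hadamardOn (0 : Fin 3) 1 * Zmat 3 0 * hadamardOn 0 1 * (Equiv.swap 1 2).permMatrix ℝ =
      !![0, 0, -1; -1, 0, 0; 0, 1, 0] := by
  have h2 : Real.sqrt 2 * Real.sqrt 2 = 2 := Real.mul_self_sqrt (by norm_num)
  ext i j
  fin_cases i <;> fin_cases j <;>
    simp [mul_apply, Fin.sum_univ_three, hadamardOn, Zmat, PEquiv.toMatrix_apply,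
      Equiv.swap_apply_def] <;> field_simp <;> linarith

lemma hadamardOn_one_two_conj_Zmat :
    hadamardOn (1 : Fin 3) 2 * Zmat 3 2 * hadamardOn 1 2 = (Equiv.swap 1 2).permMatrix ℝ := by
  have h2 : Real.sqrt 2 * Real.sqrt 2 = 2 := Real.mul_self_sqrt (by norm_num)
  ext i j
  fin_cases i <;> fin_cases j <;>
    simp [mul_apply, Fin.sum_univ_three, hadamardOn, Zmat, PEquiv.toMatrix_apply,
      Equiv.swap_apply_def] <;> field_simp <;> linarith

lemma signed_three_cycle_pow_three :
    (!![0, 0, -1; -1, 0, 0; 0, 1, 0] : Matrix (Fin 3) (Fin 3) ℝ) ^ 3 = 1 := by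
  rw [pow_succ, pow_two, one_fin_three]
  simp

theorem d4_matrix_fin_three_prod_fin_two :
    (hadamardOn ((0, 0) : Fin 3 × Fin 2) (1, 0) * hadamardOn ((0, 1) : Fin 3 × Fin 2) (1, 1) *
        hadamardOn ((0, 0) : Fin 3 × Fin 2) (0, 1) * hadamardOn ((0, 0) : Fin 3 × Fin 2) (1, 0) *
        hadamardOn ((0, 1) : Fin 3 × Fin 2) (1, 1) *
        (Equiv.swap ((1, 0) : Fin 3 × Fin 2) (2, 0)).permMatrix ℝ *
        (Equiv.swap ((1, 1) : Fin 3 × Fin 2) (2, 1)).permMatrix ℝ) ^ 3 =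
      hadamardOn ((1, 0) : Fin 3 × Fin 2) (2, 0) * hadamardOn ((1, 1) : Fin 3 × Fin 2) (2, 1) *
        hadamardOn ((2, 0) : Fin 3 × Fin 2) (2, 1) * hadamardOn ((1, 0) : Fin 3 × Fin 2) (2, 0) *
        hadamardOn ((1, 1) : Fin 3 × Fin 2) (2, 1) *
        (Equiv.swap ((1, 0) : Fin 3 × Fin 2) (2, 0)).permMatrix ℝ *
        (Equiv.swap ((1, 1) : Fin 3 × Fin 2) (2, 1)).permMatrix ℝ := by
  have regroup : ∀ A B C D E F G : Matrix (Fin 3 × Fin 2) (Fin 3 × Fin 2) ℝ,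
      A * B * C * D * E * F * G = A * B * C * (D * E) * (F * G) := by
    intros; simp only [mul_assoc]
  rw [regroup, regroup]
  simp only [hadamardOn_mk_zero_mul_hadamardOn_mk_one,
    permMatrix_swap_mk_zero_mul_permMatrix_swap_mk_one, hadamardOn_mk_zero_mk_one,
    ← kroneckerSplit_self hadamardProj isIdempotentElem_hadamardProj, ← map_mul, ← map_pow]
  congr 1
  refine Prod.ext ?_ ?_
  · simp only [Prod.pow_fst, Prod.fst_mul, mul_one, one_mul,
      hadamardOn_mul_self (by decide : (0 : Fin 3) ≠ 1),
      hadamardOn_mul_self (by decide : (1 : Fin 3) ≠ 2)]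
    rw [pow_succ, pow_two, permMatrix_swap_mul_self, one_mul]
  · simp only [Prod.pow_snd, Prod.snd_mul]
    rw [hadamardOn_zero_one_conj_Zmat_mul_swap, signed_three_cycle_pow_three,
      hadamardOn_one_two_conj_Zmat, permMatrix_swap_mul_self]

theorem d4_matrix_general (n : ℕ) (a b c d e f : Fin n)
    (hab : a ≠ b) (hac : a ≠ c) (had : a ≠ d) (hae : a ≠ e) (haf : a ≠ f)
    (hbc : b ≠ c) (hbd : b ≠ d) (hbe : b ≠ e) (hbf : b ≠ f)
    (hcd : c ≠ d) (hce : c ≠ e) (hcf : c ≠ f)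
    (hde : d ≠ e) (hdf : d ≠ f) (hef : e ≠ f) :
    (Hmat n a c * Hmat n b d * Hmat n a b * Hmat n a c * Hmat n b d *
        Xmat n c e * Xmat n d f) ^ 3 =
      Hmat n c e * Hmat n d f * Hmat n e f * Hmat n c e * Hmat n d f *
        Xmat n c e * Xmat n d f := by
  obtain ⟨g, rfl, rfl, rfl, rfl, rfl, rfl⟩ : ∃ g : Fin 3 × Fin 2 ↪ Fin n,
      g (0, 0) = a ∧ g (0, 1) = b ∧ g (1, 0) = c ∧ g (1, 1) = d ∧
        g (2, 0) = e ∧ g (2, 1) = f := by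
    refine ⟨⟨fun p => ![![a, b], ![c, d], ![e, f]] p.1 p.2, ?_⟩,
      rfl, rfl, rfl, rfl, rfl, rfl⟩
    rintro ⟨i, k⟩ ⟨j, l⟩ h
    fin_cases i <;> fin_cases k <;> fin_cases j <;> fin_cases l <;> simp_all [eq_comm]
  simp only [Hmat_eq_hadamardOn, Xmat_eq_permMatrix_swap, ← extendId_hadamardOn,
    ← extendId_permMatrix_swap, ← map_mul, ← map_pow, d4_matrix_fin_three_prod_fin_two]

theorem d4_matrix (n : ℕ) (hn : 1 ≤ n) (a b c d e f : Fin n)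
    (hab : a ≠ b) (hac : a ≠ c) (had : a ≠ d) (hae : a ≠ e) (haf : a ≠ f)
    (hbc : b ≠ c) (hbd : b ≠ d) (hbe : b ≠ e) (hbf : b ≠ f)
    (hcd : c ≠ d) (hce : c ≠ e) (hcf : c ≠ f)
    (hde : d ≠ e) (hdf : d ≠ f) (hef : e ≠ f) :
    (Hmat n a c * Hmat n b d * Hmat n a b * Hmat n a c * Hmat n b d *
        Xmat n c e * Xmat n d f) ^ 3 =
      Hmat n c e * Hmat n d f * Hmat n e f * Hmat n c e * Hmat n d f *
        Xmat n c e * Xmat n d f :=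
  d4_matrix_general n a b c d e f hab hac had hae haf hbc hbd hbe hbf hcd hce hcf hde hdf hef
end
end

section
/- Let n ≥ 1 and let a, b, c, d ∈ {1,…,n} be pairwise distinct. Then, as words over 𝒢_n, (H_{a,b} H_{c,d} H_{a,c} H_{b,d})² ≈ ε. -/
open Matrix

noncomputable section

/-! Work in the group of units of the quotient monoid `𝒢_n^* / ≈`, which contains the classes of
the involutions `H_{b,c}`. Put `t = H_{c,d} H_{a,c} H_{b,d}`. As `H_{a,c}` and `H_{b,d}` are commuting
involutions, conjugation by the involution `H_{c,d}` inverts `t`, so every `t^k H_{c,d}` is an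
involution (a reflection of a dihedral group). Relation `(H_{c,d} H_{a,c} H_{b,d})⁴ ≈ H_{a,b} H_{c,d}`
then gives `H_{a,b} H_{c,d} H_{a,c} H_{b,d} = t⁴ · H_{c,d} t = t³ H_{c,d}`. -/

theorem sq_pow_mul_eq_one_of_conj_eq_inv {G : Type*} [Group G] {c t : G}
    (hc : c * c = 1) (hct : c * t * c = t⁻¹) (k : ℕ) : (t ^ k * c) ^ 2 = 1 := by
  have hc' : c⁻¹ = c := inv_eq_of_mul_eq_one_right hc
  have hctk : c * t ^ k * c = (t ^ k)⁻¹ := by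
    nth_rewrite 2 [← hc']
    rw [← conj_pow, hc', hct, inv_pow]
  calc (t ^ k * c) ^ 2 = t ^ k * (c * t ^ k * c) := by simp only [sq, mul_assoc]
    _ = 1 := by rw [hctk, mul_inv_cancel]

theorem sq_mul_mul_mul_eq_one_of_pow_four {G : Type*} [Group G] {a c p q : G}
    (hc : c * c = 1) (hp : p * p = 1) (hq : q * q = 1) (hpq : Commute p q)
    (h : (c * p * q) ^ 4 = a * c) : (a * c * p * q) ^ 2 = 1 := by
  have hconj : c * (c * p * q) * c = (c * p * q)⁻¹ := by
    rw [_root_.mul_inv_rev, _root_.mul_inv_rev, inv_eq_of_mul_eq_one_right hc,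
      inv_eq_of_mul_eq_one_right hp, inv_eq_of_mul_eq_one_right hq]
    simp only [← mul_assoc, hc, one_mul, hpq.eq]
  have hpq_eq : p * q = (c * p * q)⁻¹ * c := by
    rw [← hconj]
    simp only [mul_assoc, hc, mul_one]
    rw [← mul_assoc, hc, one_mul]
  have hword : a * c * p * q = (c * p * q) ^ 3 * c := by
    rw [mul_assoc (a * c), hpq_eq, ← h, pow_succ, mul_assoc, mul_inv_cancel_left]
  rw [hword]
  exact sq_pow_mul_eq_one_of_conj_eq_inv hc hconj 3

def wordCon (n : ℕ) : Con (FreeMonoid (Gen n)) where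
  r u v := WRel n (FreeMonoid.toList u) (FreeMonoid.toList v)
  iseqv := ⟨WRel.refl, WRel.symm, WRel.trans⟩
  mul' h h' := (h.append_right _).trans (WRel.append_left _ h')

theorem wRel_iff_eq {n : ℕ} {u v : List (Gen n)} :
    WRel n u v ↔ (FreeMonoid.ofList u : (wordCon n).Quotient) = FreeMonoid.ofList v :=
  (Con.eq (wordCon n)).symm

def hUnit {n : ℕ} (b c : Fin n) (hbc : b ≠ c) : (wordCon n).Quotientˣ :=
  ⟨FreeMonoid.of (Gen.H b c hbc), FreeMonoid.of (Gen.H b c hbc),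
    (Con.eq _).2 (WRel.rel_hh b c hbc), (Con.eq _).2 (WRel.rel_hh b c hbc)⟩

theorem hUnit_mul_self {n : ℕ} (b c : Fin n) (hbc : b ≠ c) :
    hUnit b c hbc * hUnit b c hbc = 1 :=
  Units.ext ((Con.eq _).2 (WRel.rel_hh b c hbc))

theorem hUnit_commute {n : ℕ} {a b c d : Fin n} (hab : a ≠ b) (hac : a ≠ c) (had : a ≠ d)
    (hbc : b ≠ c) (hbd : b ≠ d) (hcd : c ≠ d) : Commute (hUnit a b hab) (hUnit c d hcd) :=
  Units.ext ((Con.eq _).2 (WRel.rel_hh_comm a b c d hab hac had hbc hbd hcd))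

theorem hUnit_mul_mul_pow_four {n : ℕ} {a b c d : Fin n} (hab : a ≠ b) (hac : a ≠ c) (had : a ≠ d)
    (hbc : b ≠ c) (hbd : b ≠ d) (hcd : c ≠ d) :
    (hUnit c d hcd * hUnit a c hac * hUnit b d hbd) ^ 4 = hUnit a b hab * hUnit c d hcd :=
  Units.ext ((Con.eq _).2 (WRel.rel_d3 a b c d hab hac had hbc hbd hcd))

theorem rel_f1_general (n : ℕ) (a b c d : Fin n)
    (hab : a ≠ b) (hac : a ≠ c) (had : a ≠ d)
    (hbc : b ≠ c) (hbd : b ≠ d) (hcd : c ≠ d) :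
    WRel n
      ([Gen.H a b hab, Gen.H c d hcd, Gen.H a c hac, Gen.H b d hbd] ++
       [Gen.H a b hab, Gen.H c d hcd, Gen.H a c hac, Gen.H b d hbd])
      [] :=
  -- the class of a word is definitionally the product of the classes of its letters
  wRel_iff_eq.2 <| congrArg Units.val <|
    sq_mul_mul_mul_eq_one_of_pow_four (hUnit_mul_self c d hcd) (hUnit_mul_self a c hac)
      (hUnit_mul_self b d hbd) (hUnit_commute hac hab had hbc.symm hcd hbd)
      (hUnit_mul_mul_pow_four hab hac had hbc hbd hcd)

theorem rel_f1 (n : ℕ) (hn : 1 ≤ n) (a b c d : Fin n)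
    (hab : a ≠ b) (hac : a ≠ c) (had : a ≠ d)
    (hbc : b ≠ c) (hbd : b ≠ d) (hcd : c ≠ d) :
    WRel n
      ([Gen.H a b hab, Gen.H c d hcd, Gen.H a c hac, Gen.H b d hbd] ++
       [Gen.H a b hab, Gen.H c d hcd, Gen.H a c hac, Gen.H b d hbd])
      [] :=
  rel_f1_general n a b c d hab hac had hbc hbd hcd
end
end

section
/- Let n ≥ 1 and let a, b, c ∈ {1,…,n} be pairwise distinct. Then, as words over 𝒢_n, H_{c,b} X_{a,b} ≈ X_{a,b} H_{c,a} and H_{c,a} X_{b,c} ≈ X_{b,c} H_{b,a}. -/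
open Matrix

noncomputable section

/-! Unfolding `H_{c,b}` by (e2) as `X_{b,c} H_{b,c} X_{b,c}`, the transposition `X_{a,b}` is pushed
through with the conjugation relations among transpositions and the relation between `H` and `X`
with ordered indices; folding back by (e2) gives `H_{c,a}`. The second relation is the mirror
image. -/

namespace WRel

variable {n : ℕ}

instance : Trans (WRel n) (WRel n) (WRel n) := ⟨WRel.trans⟩

theorem congr_middle (w₁ w₂ : List (Gen n)) {u v : List (Gen n)} (h : WRel n u v) :
    WRel n (w₁ ++ u ++ w₂) (w₁ ++ v ++ w₂) :=
  append_right w₂ (append_left w₁ h)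

theorem rel_hx4_swap (a b c : Fin n) (hab : a ≠ b) (hac : a ≠ c) (hbc : b ≠ c) :
    WRel n [Gen.H c b hbc.symm, Gen.X a b hab] [Gen.X a b hab, Gen.H c a hac.symm] :=
  calc WRel n [Gen.H c b hbc.symm, Gen.X a b hab]
        [Gen.X b c hbc, Gen.H b c hbc, Gen.X b c hbc, Gen.X a b hab] :=
        congr_middle [] [Gen.X a b hab] (rel_h_swap b c hbc)
    WRel n _ [Gen.X b c hbc, Gen.H b c hbc, Gen.X a b hab, Gen.X a c hac] :=
        congr_middle [Gen.X b c hbc, Gen.H b c hbc] [] (rel_xc2 a b c hab hac hbc)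
    WRel n _ [Gen.X b c hbc, Gen.X a b hab, Gen.H a c hac, Gen.X a c hac] :=
        congr_middle [Gen.X b c hbc] [Gen.X a c hac] (rel_hx4 a b c hab hac hbc)
    WRel n _ [Gen.X a b hab, Gen.X a c hac, Gen.H a c hac, Gen.X a c hac] :=
        congr_middle [] [Gen.H a c hac, Gen.X a c hac] (rel_xc2 a b c hab hac hbc)
    WRel n _ [Gen.X a b hab, Gen.H c a hac.symm] :=
        congr_middle [Gen.X a b hab] [] (rel_h_swap a c hac).symm

theorem rel_hx5_swap (a b c : Fin n) (hab : a ≠ b) (hac : a ≠ c) (hbc : b ≠ c) :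
    WRel n [Gen.H c a hac.symm, Gen.X b c hbc] [Gen.X b c hbc, Gen.H b a hab.symm] :=
  calc WRel n [Gen.H c a hac.symm, Gen.X b c hbc]
        [Gen.X a c hac, Gen.H a c hac, Gen.X a c hac, Gen.X b c hbc] :=
        congr_middle [] [Gen.X b c hbc] (rel_h_swap a c hac)
    WRel n _ [Gen.X a c hac, Gen.H a c hac, Gen.X b c hbc, Gen.X a b hab] :=
        congr_middle [Gen.X a c hac, Gen.H a c hac] [] (rel_xc3 a b c hab hac hbc)
    WRel n _ [Gen.X a c hac, Gen.X b c hbc, Gen.H a b hab, Gen.X a b hab] :=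
        congr_middle [Gen.X a c hac] [Gen.X a b hab] (rel_hx5 a b c hab hac hbc)
    WRel n _ [Gen.X b c hbc, Gen.X a b hab, Gen.H a b hab, Gen.X a b hab] :=
        congr_middle [] [Gen.H a b hab, Gen.X a b hab] (rel_xc3 a b c hab hac hbc)
    WRel n _ [Gen.X b c hbc, Gen.H b a hab.symm] :=
        congr_middle [Gen.X b c hbc] [] (rel_h_swap a b hab).symm

end WRel

theorem rel_c4c5_reversed_general (n : ℕ) (a b c : Fin n)
    (hab : a ≠ b) (hac : a ≠ c) (hbc : b ≠ c) :
    WRel n [Gen.H c b (Ne.symm hbc), Gen.X a b hab]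
        [Gen.X a b hab, Gen.H c a (Ne.symm hac)] ∧
    WRel n [Gen.H c a (Ne.symm hac), Gen.X b c hbc]
        [Gen.X b c hbc, Gen.H b a (Ne.symm hab)] :=
  ⟨WRel.rel_hx4_swap a b c hab hac hbc, WRel.rel_hx5_swap a b c hab hac hbc⟩

theorem rel_c4c5_reversed (n : ℕ) (hn : 1 ≤ n) (a b c : Fin n)
    (hab : a ≠ b) (hac : a ≠ c) (hbc : b ≠ c) :
    WRel n [Gen.H c b (Ne.symm hbc), Gen.X a b hab]
        [Gen.X a b hab, Gen.H c a (Ne.symm hac)] ∧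
    WRel n [Gen.H c a (Ne.symm hac), Gen.X b c hbc]
        [Gen.X b c hbc, Gen.H b a (Ne.symm hab)] :=
  rel_c4c5_reversed_general n a b c hab hac hbc
end
end

section
/- Let v ∈ ℤ[1/√2]⁴ and let k ≥ 2 be such that √2^k·v has all entries in ℤ[√2] and either all four entries of √2^k·v are ≡ 1 (mod 2) or all four entries are ≡ 1+√2 (mod 2). Then √2^{k−1}·H_{1,3}H_{2,4}H_{1,2}H_{3,4}·v has all entries in ℤ[√2], or √2^{k−1}·H_{1,4}H_{2,3}H_{1,2}H_{3,4}·v has all entries in ℤ[√2]. -/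
open Matrix

noncomputable section

/-!
Write `√2 ^ k * v i = (2 p_i + 1) + (2 q_i + β) √2` with one `β` for all `i`. Each entry of
either product applied to `v` is `(∑ ε_j v_j) / 2` for a row `ε` of signs, and it loses a
factor `√2` exactly when `∑ ε_j √2 ^ k v_j ∈ 2√2 ℤ[√2]`, i.e. when its integer part is
divisible by `4` and its `√2`-part by `2`. The `√2`-part `∑ ε_j (2 q_j + β)` is always even,
and the integer part is `≡ 2 ∑ p_j + ∑ ε_j (mod 4)`, where `∑ ε_j ≡ 0` or `2 (mod 4)` according
as `ε` has an even or odd number of minus signs. The rows of the first product have an even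
number of minus signs and those of the second an odd number, so the parity of `∑ p_j` decides
which of the two products works.
-/

open Real

lemma Hmat_mulVec_apply {n : ℕ} {b c : Fin n} (hbc : b ≠ c) (u : Fin n → ℝ) (i : Fin n) :
    (Hmat n b c *ᵥ u) i =
      if i = b then (u b + u c) / √2 else if i = c then (u b - u c) / √2 else u i := by
  simp only [mulVec, dotProduct, Hmat]
  by_cases hib : i = b
  · subst hib
    rw [Fintype.sum_eq_add i c hbc (fun j hj => by simp [hj.1, hj.2, Ne.symm hj.1])]
    simp only [and_self, ↓reduceIte, one_div, hbc.symm, and_false]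
    ring
  by_cases hic : i = c
  · subst hic
    rw [Fintype.sum_eq_add b i hbc (fun j hj => by simp [hj.1, hj.2, Ne.symm hj.2])]
    simp only [hbc.symm, and_true, ↓reduceIte, hbc, and_self, one_div, and_false, neg_mul]
    ring
  rw [Fintype.sum_eq_single i (fun j hj => by simp [hib, hic, Ne.symm hj])]
  simp [hib, hic]

def evenSignMatrix : Matrix (Fin 4) (Fin 4) ℤ :=
  !![1, 1, 1, 1; 1, -1, 1, -1; 1, 1, -1, -1; 1, -1, -1, 1]

def oddSignMatrix : Matrix (Fin 4) (Fin 4) ℤ :=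
  !![1, 1, 1, -1; 1, -1, 1, 1; 1, -1, -1, -1; 1, 1, -1, 1]

lemma Hmat02_13_01_23_mulVec_apply (u : Fin 4 → ℝ) (i : Fin 4) :
    ((Hmat 4 0 2 * Hmat 4 1 3 * Hmat 4 0 1 * Hmat 4 2 3) *ᵥ u) i =
      (∑ j, (evenSignMatrix i j : ℝ) * u j) / 2 := by
  have h2 : √2 ^ 2 = 2 := sq_sqrt zero_le_two
  simp only [← mulVec_mulVec, Hmat_mulVec_apply (by decide : (0 : Fin 4) ≠ 2),
    Hmat_mulVec_apply (by decide : (1 : Fin 4) ≠ 3),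
    Hmat_mulVec_apply (by decide : (0 : Fin 4) ≠ 1),
    Hmat_mulVec_apply (by decide : (2 : Fin 4) ≠ 3), Fin.sum_univ_four]
  fin_cases i <;>
    simp only [evenSignMatrix, of_apply, cons_val', cons_val, cons_val_zero, cons_val_one,
      cons_val_fin_one, Fin.isValue, Fin.zero_eta, Fin.mk_one, Fin.reduceFinMk, Fin.reduceEq,
      ↓reduceIte, Int.cast_one, Int.cast_neg, one_mul, neg_mul] <;>
    field_simp <;> rw [h2] <;> ring

lemma Hmat03_12_01_23_mulVec_apply (u : Fin 4 → ℝ) (i : Fin 4) :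
    ((Hmat 4 0 3 * Hmat 4 1 2 * Hmat 4 0 1 * Hmat 4 2 3) *ᵥ u) i =
      (∑ j, (oddSignMatrix i j : ℝ) * u j) / 2 := by
  have h2 : √2 ^ 2 = 2 := sq_sqrt zero_le_two
  simp only [← mulVec_mulVec, Hmat_mulVec_apply (by decide : (0 : Fin 4) ≠ 3),
    Hmat_mulVec_apply (by decide : (1 : Fin 4) ≠ 2),
    Hmat_mulVec_apply (by decide : (0 : Fin 4) ≠ 1),
    Hmat_mulVec_apply (by decide : (2 : Fin 4) ≠ 3), Fin.sum_univ_four]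
  fin_cases i <;>
    simp only [oddSignMatrix, of_apply, cons_val', cons_val, cons_val_zero, cons_val_one,
      cons_val_fin_one, Fin.isValue, Fin.zero_eta, Fin.mk_one, Fin.reduceFinMk, Fin.reduceEq,
      ↓reduceIte, Int.cast_one, Int.cast_neg, one_mul, neg_mul] <;>
    field_simp <;> rw [h2] <;> ring

lemma inZsqrt2_sqrt2_pow_pred_mul_half {k : ℕ} (hk : 1 ≤ k) {y : ℝ} {A B : ℤ}
    (h : √2 ^ k * y = 4 * A + 2 * B * √2) : inZsqrt2 (√2 ^ (k - 1) * (y / 2)) := by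
  refine ⟨B, A, mul_left_cancel₀ (sqrt_ne_zero'.2 zero_lt_two) ?_⟩
  have hpow : √2 * √2 ^ (k - 1) = √2 ^ k := by rw [← pow_succ']; congr 1; omega
  have h2 : √2 * √2 = 2 := mul_self_sqrt zero_le_two
  calc √2 * (√2 ^ (k - 1) * (y / 2)) = (√2 ^ k * y) / 2 := by rw [← hpow]; ring
    _ = √2 * (B + A * √2) := by rw [h]; linear_combination (-(A : ℝ)) * h2

lemma sqrt2_pow_mul_sum_eq {ι : Type*} [Fintype ι] {k : ℕ} {v : ι → ℝ} {a b : ι → ℤ}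
    (hv : ∀ i, √2 ^ k * v i = a i + b i * √2) (ε : ι → ℤ) :
    √2 ^ k * ∑ i, ε i * v i = ↑(∑ i, ε i * a i) + ↑(∑ i, ε i * b i) * √2 := by
  push_cast
  rw [Finset.mul_sum, Finset.sum_mul, ← Finset.sum_add_distrib]
  refine Finset.sum_congr rfl fun i _ => ?_
  linear_combination (ε i : ℝ) * hv i

lemma inZsqrt2_sqrt2_pow_pred_mul_half_sum {ι : Type*} [Fintype ι] {k : ℕ} (hk : 1 ≤ k)
    {v : ι → ℝ} {a b : ι → ℤ} (hv : ∀ i, √2 ^ k * v i = a i + b i * √2) {ε : ι → ℤ}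
    (ha : 4 ∣ ∑ i, ε i * a i) (hb : 2 ∣ ∑ i, ε i * b i) :
    inZsqrt2 (√2 ^ (k - 1) * ((∑ i, ε i * v i) / 2)) := by
  obtain ⟨A, hA⟩ := ha
  obtain ⟨B, hB⟩ := hb
  refine inZsqrt2_sqrt2_pow_pred_mul_half hk (A := A) (B := B) ?_
  rw [sqrt2_pow_mul_sum_eq hv, hA, hB]
  push_cast
  ring

lemma exists_eq_of_cong2 {x : ℝ} {r s : ℤ} (h : cong2 x (r + s * √2)) :
    ∃ p q : ℤ, x = ↑(2 * p + r) + ↑(2 * q + s) * √2 := by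
  obtain ⟨p, q, hpq⟩ := h
  refine ⟨p, q, ?_⟩
  push_cast
  linear_combination 2 * hpq

theorem lde_reduction_uniform_general (v : Fin 4 → ℝ) (k : ℕ) (hk : 2 ≤ k)
    (hmod : (∀ i, cong2 (Real.sqrt 2 ^ k * v i) 1) ∨
      (∀ i, cong2 (Real.sqrt 2 ^ k * v i) (1 + Real.sqrt 2))) :
    (∀ i, inZsqrt2 (Real.sqrt 2 ^ (k - 1) *
        ((Hmat 4 0 2 * Hmat 4 1 3 * Hmat 4 0 1 * Hmat 4 2 3).mulVec v) i)) ∨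
    (∀ i, inZsqrt2 (Real.sqrt 2 ^ (k - 1) *
        ((Hmat 4 0 3 * Hmat 4 1 2 * Hmat 4 0 1 * Hmat 4 2 3).mulVec v) i)) := by
  obtain ⟨β, p, q, hw⟩ : ∃ (β : ℤ) (p q : Fin 4 → ℤ),
      ∀ i, √2 ^ k * v i = ↑(2 * p i + 1) + ↑(2 * q i + β) * √2 := by
    rcases hmod with h | h
    · choose p q hpq using fun i => exists_eq_of_cong2 (r := 1) (s := 0) (by simpa using h i)
      exact ⟨0, p, q, hpq⟩
    · choose p q hpq using fun i => exists_eq_of_cong2 (r := 1) (s := 1) (by simpa using h i)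
      exact ⟨1, p, q, hpq⟩
  have reduce := fun ε => inZsqrt2_sqrt2_pow_pred_mul_half_sum (by omega) hw (ε := ε)
  rcases Int.emod_two_eq_zero_or_one (∑ i, p i) with hp | hp
  · refine .inl fun i => ?_
    rw [Hmat02_13_01_23_mulVec_apply]
    apply reduce <;> simp only [Fin.sum_univ_four] at hp ⊢ <;> fin_cases i <;>
      simp only [evenSignMatrix, of_apply, cons_val', cons_val, cons_val_zero, cons_val_one,
        cons_val_fin_one, Fin.isValue, Fin.zero_eta, Fin.mk_one, Fin.reduceFinMk] <;> omega
  · refine .inr fun i => ?_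
    rw [Hmat03_12_01_23_mulVec_apply]
    apply reduce <;> simp only [Fin.sum_univ_four] at hp ⊢ <;> fin_cases i <;>
      simp only [oddSignMatrix, of_apply, cons_val', cons_val, cons_val_zero, cons_val_one,
        cons_val_fin_one, Fin.isValue, Fin.zero_eta, Fin.mk_one, Fin.reduceFinMk] <;> omega

theorem lde_reduction_uniform (v : Fin 4 → ℝ) (hv : ∀ i, inZinvsqrt2 (v i))
    (k : ℕ) (hk : 2 ≤ k) (hvk : ∀ i, inZsqrt2 (Real.sqrt 2 ^ k * v i))
    (hmod : (∀ i, cong2 (Real.sqrt 2 ^ k * v i) 1) ∨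
      (∀ i, cong2 (Real.sqrt 2 ^ k * v i) (1 + Real.sqrt 2))) :
    (∀ i, inZsqrt2 (Real.sqrt 2 ^ (k - 1) *
        ((Hmat 4 0 2 * Hmat 4 1 3 * Hmat 4 0 1 * Hmat 4 2 3).mulVec v) i)) ∨
    (∀ i, inZsqrt2 (Real.sqrt 2 ^ (k - 1) *
        ((Hmat 4 0 3 * Hmat 4 1 2 * Hmat 4 0 1 * Hmat 4 2 3).mulVec v) i)) :=
  lde_reduction_uniform_general v k hk hmod
end
end

section
/- Let n ≥ 1 and let s, r ∈ O_n(ℤ[1/√2]) with level(s) = level(r) = (j, k, l) where k ≥ 1. Let 1 ≤ a, b, c, d ≤ j be pairwise distinct indices such that lde(s_{a,j}) = lde(s_{b,j}) = k, lde(s_{c,j}) ≤ k−1, lde(s_{d,j}) ≤ k−1, r = H_{a,c}·H_{b,d}·H_{a,b}·H_{b,d}·H_{a,c}·s, and √2^k·s_{a,j} ≢ √2^k·s_{b,j} (mod 2). Then either (lde(r_{a,j}) = lde(r_{b,j}) = k, lde(r_{c,j}) ≤ k−1 and lde(r_{d,j}) ≤ k−1), or (lde(r_{c,j}) = lde(r_{d,j})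 = k, lde(r_{a,j}) ≤ k−1 and lde(r_{b,j}) ≤ k−1). -/
open Matrix

noncomputable section

/-!
Let `x` and `y = G x` be the `j`-th columns of `s` and `r`, where
`G = H_{a,c} H_{b,d} H_{a,b} H_{b,d} H_{a,c}`. A direct computation gives
`y_a - y_c = x_a - x_c`, `y_b - y_d = x_b - x_d` and `y_a - y_b = √2 y_b - x_c + (1 + √2) x_d`.
The reals of `lde ≤ k - 1` form a subgroup of index two in those of `lde ≤ k`, the coset of `x`
being the parity of `p` in `√2 ^ k x = p + q √2`. As `lde x_a = lde x_b = k` and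
`lde x_c, lde x_d ≤ k - 1`, the entries `y_a, y_c` lie in different cosets, so do `y_b, y_d`,
while `y_a, y_b` lie in the same one; this leaves exactly the two patterns of the statement.
-/

lemma intCast_add_intCast_mul_sqrt_two_inj {p q p' q' : ℤ}
    (h : (p : ℝ) + q * √2 = p' + q' * √2) : p = p' ∧ q = q' := by
  have hq : q = q' := by
    by_contra hne
    have hirr := irrational_sqrt_two.intCast_mul (sub_ne_zero.mpr hne)
    exact hirr.ne_int (p' - p) (by push_cast; linarith)
  subst hq
  exact ⟨by exact_mod_cast add_right_cancel h, rfl⟩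

lemma inZsqrt2_sqrt_two_mul {x : ℝ} (hx : inZsqrt2 x) : inZsqrt2 (√2 * x) := by
  obtain ⟨p, q, rfl⟩ := hx
  exact ⟨2 * q, p, by push_cast; linear_combination (q : ℝ) * Real.mul_self_sqrt zero_le_two⟩

lemma inZsqrt2_div_sqrt_two_iff (p q : ℤ) : inZsqrt2 ((p + q * √2) / √2) ↔ 2 ∣ p := by
  have hsq : √2 * √2 = 2 := Real.mul_self_sqrt zero_le_two
  have hne : √2 ≠ 0 := by positivity
  constructor
  · rintro ⟨p', q', h⟩
    rw [div_eq_iff hne] at h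
    have h' : (p : ℝ) + q * √2 = ((2 * q' : ℤ) : ℝ) + p' * √2 := by
      push_cast; linear_combination h + q' * hsq
    exact ⟨q', (intCast_add_intCast_mul_sqrt_two_inj h').1⟩
  · rintro ⟨p', rfl⟩
    refine ⟨q, p', ?_⟩
    rw [div_eq_iff hne]
    push_cast
    linear_combination (-p' : ℝ) * hsq

def ldeAtMost (m : ℕ) : AddSubgroup ℝ where
  carrier := {x | inZsqrt2 (√2 ^ m * x)}
  zero_mem' := ⟨0, 0, by simp⟩
  add_mem' := by
    rintro x y ⟨p, q, hx⟩ ⟨p', q', hy⟩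
    exact ⟨p + p', q + q', by simp only [mul_add, hx, hy]; push_cast; ring⟩
  neg_mem' := by
    rintro x ⟨p, q, hx⟩
    exact ⟨-p, -q, by simp only [mul_neg, hx]; push_cast; ring⟩

section ldeAtMost

variable {m : ℕ} {x y : ℝ}

lemma mem_ldeAtMost : x ∈ ldeAtMost m ↔ inZsqrt2 (√2 ^ m * x) := Iff.rfl

lemma ldeAtMost_mono : Monotone ldeAtMost :=
  monotone_nat_of_le_succ fun m x hx => by
    rw [mem_ldeAtMost, pow_succ', mul_assoc]
    exact inZsqrt2_sqrt_two_mul hx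

lemma sqrt_two_mul_mem_ldeAtMost (hx : x ∈ ldeAtMost (m + 1)) : √2 * x ∈ ldeAtMost m := by
  rwa [mem_ldeAtMost, ← mul_assoc, ← pow_succ]

lemma lde_le_of_mem_ldeAtMost (hx : x ∈ ldeAtMost m) : lde x ≤ m := Nat.sInf_le hx

lemma lde_le_iff_mem_ldeAtMost (hx : inZinvsqrt2 x) : lde x ≤ m ↔ x ∈ ldeAtMost m :=
  ⟨fun h => ldeAtMost_mono h (Nat.sInf_mem hx), lde_le_of_mem_ldeAtMost⟩

lemma lde_eq_succ_iff (hx : x ∈ ldeAtMost (m + 1)) : lde x = m + 1 ↔ x ∉ ldeAtMost m := by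
  rw [← lde_le_iff_mem_ldeAtMost ⟨_, hx⟩]
  have := lde_le_of_mem_ldeAtMost hx
  omega

lemma mem_ldeAtMost_iff_two_dvd {p q : ℤ} (hx : √2 ^ (m + 1) * x = p + q * √2) :
    x ∈ ldeAtMost m ↔ 2 ∣ p := by
  rw [mem_ldeAtMost, ← inZsqrt2_div_sqrt_two_iff, ← hx, pow_succ]
  field_simp

lemma sub_mem_ldeAtMost_of_not_mem (hx : x ∈ ldeAtMost (m + 1)) (hy : y ∈ ldeAtMost (m + 1))
    (hx' : x ∉ ldeAtMost m) (hy' : y ∉ ldeAtMost m) : x - y ∈ ldeAtMost m := by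
  obtain ⟨p, q, hpq⟩ := hx
  obtain ⟨p', q', hpq'⟩ := hy
  rw [mem_ldeAtMost_iff_two_dvd hpq] at hx'
  rw [mem_ldeAtMost_iff_two_dvd hpq'] at hy'
  rw [mem_ldeAtMost_iff_two_dvd (p := p - p') (q := q - q')
    (by push_cast; linear_combination hpq - hpq')]
  omega

end ldeAtMost

lemma mem_ldeAtMost_ldeVec {m : ℕ} {v : Fin m → ℝ} (hv : ∀ i, inZinvsqrt2 (v i))
    (i : Fin m) :
    v i ∈ ldeAtMost (ldeVec v) :=
  Nat.sInf_mem (s := {k | ∀ i, inZsqrt2 (√2 ^ k * v i)})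
    ⟨Finset.univ.sup fun i => lde (v i), fun i =>
      (lde_le_iff_mem_ldeAtMost (hv i)).mp
        (Finset.le_sup (f := fun i => lde (v i)) (Finset.mem_univ i))⟩ i

section level

variable {n : ℕ} {M : Matrix (Fin n) (Fin n) ℝ}

lemma levelJ_eq_and_ldeVec_eq_of_level_eq {j k l : ℕ} (hk : k ≠ 0)
    (h : level M = toLex (j, toLex (k, l))) : levelJ M = j ∧ ldeVec (levelCol M) = k := by
  unfold level at h
  split_ifs at h <;> simp only [toLex_inj, Prod.mk.injEq] at h <;> omega

lemma inZinvsqrt2_levelCol (hM : ∀ i j, inZinvsqrt2 (M i j)) (i : Fin n) :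
    inZinvsqrt2 (levelCol M i) := by
  unfold levelCol
  split_ifs
  · exact hM _ _
  · exact ⟨0, 0, 0, by simp⟩

lemma levelCol_mul_of_levelJ_eq (A : Matrix (Fin n) (Fin n) ℝ) (h : levelJ (A * M) = levelJ M) :
    levelCol (A * M) = A *ᵥ levelCol M := by
  unfold levelCol
  rw [h]
  split_ifs
  · rfl
  · exact (Matrix.mulVec_zero A).symm

end level

section Hmat

variable {n : ℕ} {p q : Fin n} (v : Fin n → ℝ)

lemma Hmat_mulVec_apply_left (hpq : p ≠ q) : (Hmat n p q *ᵥ v) p = (v p + v q) / √2 := by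
  rw [Matrix.mulVec, dotProduct, Fintype.sum_eq_add p q hpq]
  · simp [Hmat, hpq.symm]
    ring
  · rintro i ⟨hip, hiq⟩
    simp [Hmat, hip, hiq, Ne.symm hip]

lemma Hmat_mulVec_apply_right (hpq : p ≠ q) : (Hmat n p q *ᵥ v) q = (v p - v q) / √2 := by
  rw [Matrix.mulVec, dotProduct, Fintype.sum_eq_add p q hpq]
  · simp [Hmat, hpq, hpq.symm]
    ring
  · rintro i ⟨hip, hiq⟩
    simp [Hmat, hip, hiq, Ne.symm hiq]

lemma Hmat_mulVec_apply_of_ne {i : Fin n} (hip : i ≠ p) (hiq : i ≠ q) :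
    (Hmat n p q *ᵥ v) i = v i := by
  simp [Hmat, Matrix.mulVec, dotProduct, hip, hiq]

end Hmat

lemma Hmat_conj_mulVec {n : ℕ} {a b c d : Fin n} (hab : a ≠ b) (hac : a ≠ c) (had : a ≠ d)
    (hbc : b ≠ c) (hbd : b ≠ d) (hcd : c ≠ d) (v : Fin n → ℝ) :
    let w := (Hmat n a c * Hmat n b d * Hmat n a b * Hmat n b d * Hmat n a c) *ᵥ v
    w a - w c = v a - v c ∧ w b - w d = v b - v d ∧
      w a - w b = √2 * w b - v c + (v d + √2 * v d) := by
  intro w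
  simp only [w, ← Matrix.mulVec_mulVec, Hmat_mulVec_apply_left, Hmat_mulVec_apply_right,
    Hmat_mulVec_apply_of_ne, hab, hac, had, hbc, hbd, hcd, hab.symm, hac.symm, had.symm,
    hbc.symm, hbd.symm, hcd.symm, ne_eq, not_false_eq_true]
  have hsq : √2 * √2 = 2 := Real.mul_self_sqrt zero_le_two
  refine ⟨?_, ?_, ?_⟩ <;> field_simp
  · linear_combination -√2 * (v a - v c) * hsq
  · linear_combination -√2 * (v b - v d) * hsq
  · linear_combination (-v b + √2 * v c - (√2 * √2 + √2 + 1) * v d) * hsq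

lemma lde_dichotomy {m : ℕ} {ya yb yc yd : ℝ} (ha : ya ∈ ldeAtMost (m + 1))
    (hb : yb ∈ ldeAtMost (m + 1)) (hc : yc ∈ ldeAtMost (m + 1)) (hd : yd ∈ ldeAtMost (m + 1))
    (hac : ya - yc ∉ ldeAtMost m) (hbd : yb - yd ∉ ldeAtMost m)
    (hab : ya - yb ∈ ldeAtMost m) :
    (lde ya = m + 1 ∧ lde yb = m + 1 ∧ lde yc ≤ m ∧ lde yd ≤ m) ∨
    (lde yc = m + 1 ∧ lde yd = m + 1 ∧ lde ya ≤ m ∧ lde yb ≤ m) := by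
  rw [lde_eq_succ_iff ha, lde_eq_succ_iff hb, lde_eq_succ_iff hc, lde_eq_succ_iff hd,
    lde_le_iff_mem_ldeAtMost ⟨_, ha⟩, lde_le_iff_mem_ldeAtMost ⟨_, hb⟩,
    lde_le_iff_mem_ldeAtMost ⟨_, hc⟩, lde_le_iff_mem_ldeAtMost ⟨_, hd⟩]
  by_cases hya : ya ∈ ldeAtMost m
  · have hyb : yb ∈ ldeAtMost m := by simpa using sub_mem hya hab
    exact Or.inr ⟨fun hyc => hac (sub_mem hya hyc), fun hyd => hbd (sub_mem hyb hyd), hya, hyb⟩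
  · have hyb : yb ∉ ldeAtMost m := fun hyb => hya (by simpa using add_mem hab hyb)
    refine Or.inl ⟨hya, hyb, ?_, ?_⟩
    · by_contra hyc
      exact hac (sub_mem_ldeAtMost_of_not_mem ha hc hya hyc)
    · by_contra hyd
      exact hbd (sub_mem_ldeAtMost_of_not_mem hb hd hyb hyd)

theorem useful3_general (n : ℕ) (s r : Matrix (Fin n) (Fin n) ℝ)
    (hse : ∀ i j, inZinvsqrt2 (s i j))
    (hre : ∀ i j, inZinvsqrt2 (r i j))
    (j k l : ℕ) (hk : 1 ≤ k)
    (hls : level s = toLex (j, toLex (k, l))) (hlr : level r = toLex (j, toLex (k, l)))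
    (a b c d : Fin n)
    (hab : a ≠ b) (hac : a ≠ c) (had : a ≠ d)
    (hbc : b ≠ c) (hbd : b ≠ d) (hcd : c ≠ d)
    (hldea : lde (levelCol s a) = k) (hldeb : lde (levelCol s b) = k)
    (hldec : lde (levelCol s c) ≤ k - 1) (hlded : lde (levelCol s d) ≤ k - 1)
    (hr : r = Hmat n a c * Hmat n b d * Hmat n a b * Hmat n b d * Hmat n a c * s) :
    (lde (levelCol r a) = k ∧ lde (levelCol r b) = k ∧
      lde (levelCol r c) ≤ k - 1 ∧ lde (levelCol r d) ≤ k - 1) ∨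
    (lde (levelCol r c) = k ∧ lde (levelCol r d) = k ∧
      lde (levelCol r a) ≤ k - 1 ∧ lde (levelCol r b) ≤ k - 1) := by
  obtain ⟨m, rfl⟩ : ∃ m, k = m + 1 := ⟨k - 1, by omega⟩
  simp only [Nat.add_sub_cancel] at hldec hlded ⊢
  obtain ⟨hjs, -⟩ := levelJ_eq_and_ldeVec_eq_of_level_eq m.add_one_ne_zero hls
  obtain ⟨hjr, hkr⟩ := levelJ_eq_and_ldeVec_eq_of_level_eq m.add_one_ne_zero hlr
  have hcol : levelCol r = _ := hr ▸ levelCol_mul_of_levelJ_eq _ (hr ▸ hjr.trans hjs.symm)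
  obtain ⟨hac', hbd', hab'⟩ := Hmat_conj_mulVec hab hac had hbc hbd hcd (levelCol s)
  rw [← hcol] at hac' hbd' hab'
  have hmem (i : Fin n) : levelCol r i ∈ ldeAtMost (m + 1) :=
    hkr ▸ mem_ldeAtMost_ldeVec (inZinvsqrt2_levelCol hre) i
  have hxa : levelCol s a ∉ ldeAtMost m := fun h => (lde_le_of_mem_ldeAtMost h).not_gt (by omega)
  have hxb : levelCol s b ∉ ldeAtMost m := fun h => (lde_le_of_mem_ldeAtMost h).not_gt (by omega)
  have hxc := (lde_le_iff_mem_ldeAtMost (inZinvsqrt2_levelCol hse c)).mp hldec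
  have hxd := (lde_le_iff_mem_ldeAtMost (inZinvsqrt2_levelCol hse d)).mp hlded
  refine lde_dichotomy (hmem a) (hmem b) (hmem c) (hmem d) ?_ ?_ ?_
  · rw [hac']
    exact fun h => hxa (by simpa using add_mem h hxc)
  · rw [hbd']
    exact fun h => hxb (by simpa using add_mem h hxd)
  · rw [hab']
    exact add_mem (sub_mem (sqrt_two_mul_mem_ldeAtMost (hmem b)) hxc)
      (add_mem hxd (sqrt_two_mul_mem_ldeAtMost (ldeAtMost_mono m.le_succ hxd)))

theorem useful3 (n : ℕ) (hn : 1 ≤ n) (s r : Matrix (Fin n) (Fin n) ℝ)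
    (hso : s * sᵀ = 1) (hse : ∀ i j, inZinvsqrt2 (s i j))
    (hro : r * rᵀ = 1) (hre : ∀ i j, inZinvsqrt2 (r i j))
    (j k l : ℕ) (hk : 1 ≤ k)
    (hls : level s = toLex (j, toLex (k, l))) (hlr : level r = toLex (j, toLex (k, l)))
    (a b c d : Fin n)
    (hab : a ≠ b) (hac : a ≠ c) (had : a ≠ d)
    (hbc : b ≠ c) (hbd : b ≠ d) (hcd : c ≠ d)
    (haj : (a : ℕ) + 1 ≤ j) (hbj : (b : ℕ) + 1 ≤ j)
    (hcj : (c : ℕ) + 1 ≤ j) (hdj : (d : ℕ) + 1 ≤ j)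
    (hldea : lde (levelCol s a) = k) (hldeb : lde (levelCol s b) = k)
    (hldec : lde (levelCol s c) ≤ k - 1) (hlded : lde (levelCol s d) ≤ k - 1)
    (hr : r = Hmat n a c * Hmat n b d * Hmat n a b * Hmat n b d * Hmat n a c * s)
    (hmod : ¬ cong2 (Real.sqrt 2 ^ k * levelCol s a) (Real.sqrt 2 ^ k * levelCol s b)) :
    (lde (levelCol r a) = k ∧ lde (levelCol r b) = k ∧
      lde (levelCol r c) ≤ k - 1 ∧ lde (levelCol r d) ≤ k - 1) ∨
    (lde (levelCol r c) = k ∧ lde (levelCol r d) = k ∧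
      lde (levelCol r a) ≤ k - 1 ∧ lde (levelCol r b) ≤ k - 1) :=
  useful3_general n s r hse hre j k l hk hls hlr a b c d hab hac had hbc hbd hcd hldea hldeb hldec
    hlded hr
end
end

section
/- Let n ≥ 1, let s, r ∈ O_n(ℤ[1/√2]), and let G be a generator Z_a (1 ≤ a ≤ n), X_{b,c} or H_{b,c} (1 ≤ b < c ≤ n) with r = ⟦G⟧·s. Then there exists a word 𝐆' over the basic generators 𝒢'_n = {X_{1,x} : 2 ≤ x ≤ n} ∪ {Z_1, H_{1,2}} such that 𝐆' ≈ G (as words over 𝒢_n) and level(𝐆' : s →* r) = max{level(s), level(r)}. -/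
open Matrix

noncomputable section

/-!
Every generator `G` with largest index `m` is the conjugate `u G₀ u⁻¹` of a basic generator `G₀`
by a word `u` of basic swaps acting on the indices `≤ m`. Permuting rows among the first
`m + 1` cannot push the level of a matrix beyond `max (level M) (m + 1, 0, 0)`, and
`(m + 1, 0, 0) ≤ max (level s) (level r)` because `G` moves the `m`-th standard basis vector.
Every intermediate state of `u G₀ u⁻¹` is such a row permutation of `s` or of `r`.
-/

open Matrix

section

variable {n : ℕ}

namespace Gen

def IsSwapBelow (t : ℕ) : Gen n → Prop
  | Gen.X b c _ => (b : ℕ) < t ∧ (c : ℕ) < t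
  | _ => False

end Gen

section Semantics

lemma wsem_append (u v : List (Gen n)) : wsem (u ++ v) = wsem u * wsem v := by
  induction u with
  | nil => simp [wsem]
  | cons g u ih => simp [wsem, ih, Matrix.mul_assoc]

lemma Xmat_mul (p q : Fin n) (M : Matrix (Fin n) (Fin n) ℝ) :
    Xmat n p q * M = M.submatrix (Equiv.swap p q) id := by
  ext i j
  simp [Xmat, Matrix.mul_apply]

lemma Xmat_mul_self (p q : Fin n) : Xmat n p q * Xmat n p q = 1 := by
  ext i j
  simp [Xmat_mul, Xmat, Matrix.one_apply, eq_comm]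

lemma mul_Xmat (p q : Fin n) (M : Matrix (Fin n) (Fin n) ℝ) :
    M * Xmat n p q = M.submatrix id (Equiv.swap p q) := by
  ext i j
  simp [Xmat, Matrix.mul_apply, eq_comm (a := j), Equiv.swap_apply_eq_iff]

lemma Xmat_mul_mul_Xmat (p q : Fin n) (A : Matrix (Fin n) (Fin n) ℝ) :
    Xmat n p q * A * Xmat n p q = A.submatrix (Equiv.swap p q) (Equiv.swap p q) := by
  rw [Xmat_mul, mul_Xmat, submatrix_submatrix]
  rfl

lemma Zmat_submatrix (σ : Equiv.Perm (Fin n)) (a : Fin n) :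
    (Zmat n a).submatrix σ σ = Zmat n (σ.symm a) := by
  ext i j
  simp [Zmat, σ.injective.eq_iff, ← Equiv.eq_symm_apply]

lemma Xmat_submatrix (σ : Equiv.Perm (Fin n)) (b c : Fin n) :
    (Xmat n b c).submatrix σ σ = Xmat n (σ.symm b) (σ.symm c) := by
  ext i j
  have : Equiv.swap (σ.symm b) (σ.symm c) = σ⁻¹ * Equiv.swap b c * σ := by
    simpa using Equiv.swap_apply_apply σ⁻¹ b c
  simp [Xmat, this, ← Equiv.eq_symm_apply, Equiv.Perm.mul_apply, Equiv.Perm.inv_def]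

lemma Hmat_submatrix (σ : Equiv.Perm (Fin n)) (b c : Fin n) :
    (Hmat n b c).submatrix σ σ = Hmat n (σ.symm b) (σ.symm c) := by
  ext i j
  simp [Hmat, σ.injective.eq_iff, ← Equiv.eq_symm_apply]

lemma Gen.IsSwapBelow.gsem_mul_self {t : ℕ} {x : Gen n} (hx : x.IsSwapBelow t) :
    gsem x * gsem x = 1 := by
  cases x with
  | X p q _ => exact Xmat_mul_self p q
  | _ => exact hx.elim

lemma wsem_reverse_mul_self {u : List (Gen n)} (hu : ∀ x ∈ u, gsem x * gsem x = 1) :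
    wsem u.reverse * wsem u = 1 := by
  induction u with
  | nil => simp [wsem]
  | cons x u ih =>
    simp only [List.mem_cons, forall_eq_or_imp] at hu
    calc wsem (x :: u).reverse * wsem (x :: u)
        = wsem u.reverse * (gsem x * gsem x) * wsem u := by
          simp [wsem, wsem_append, Matrix.mul_assoc]
      _ = 1 := by rw [hu.1, Matrix.mul_one, ih hu.2]

end Semantics

section Level

lemma inZsqrt2_zero : inZsqrt2 0 := ⟨0, 0, by simp⟩

lemma inZsqrt2_one : inZsqrt2 1 := ⟨1, 0, by simp⟩

lemma ldeVec_eq_zero {v : Fin n → ℝ} (h : ∀ i, inZsqrt2 (v i)) : ldeVec v = 0 :=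
  Nat.sInf_eq_zero.mpr (Or.inl (by simpa using h))

lemma ldeVec_comp_perm (v : Fin n → ℝ) (σ : Equiv.Perm (Fin n)) : ldeVec (v ∘ σ) = ldeVec v := by
  unfold ldeVec
  congr 1
  ext k
  exact (σ.symm.forall_congr_left (p := fun i => inZsqrt2 (Real.sqrt 2 ^ k * v i))).symm

lemma le_levelJ {M : Matrix (Fin n) (Fin n) ℝ} {x i : Fin n}
    (h : M x i ≠ if x = i then 1 else 0) : (i : ℕ) + 1 ≤ levelJ M :=
  le_csSup ⟨n, by rintro _ ⟨j, rfl, -⟩; exact j.isLt⟩ ⟨i, rfl, x, h⟩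

lemma col_eq_of_levelJ_le {M : Matrix (Fin n) (Fin n) ℝ} {i : Fin n} (h : levelJ M ≤ i)
    (x : Fin n) : M x i = if x = i then 1 else 0 := by
  by_contra hx
  have := le_levelJ hx
  omega

lemma level_eq_toLex (M : Matrix (Fin n) (Fin n) ℝ) :
    ∃ y, level M = toLex (levelJ M, y) := by
  unfold level
  split_ifs with h
  · exact ⟨_, by rw [h]⟩
  all_goals exact ⟨_, rfl⟩

lemma level_lt_of_levelJ_lt {M N : Matrix (Fin n) (Fin n) ℝ} (h : levelJ N < levelJ M) :
    level N < level M := by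
  obtain ⟨y, hy⟩ := level_eq_toLex N
  obtain ⟨z, hz⟩ := level_eq_toLex M
  rw [hy, hz]
  exact Prod.Lex.toLex_lt_toLex.mpr (Or.inl h)

lemma toLex_levelJ_le_level (M : Matrix (Fin n) (Fin n) ℝ) :
    toLex (levelJ M, toLex (0, 0)) ≤ level M := by
  unfold level
  split_ifs with h0
  · rw [h0]
  · rfl
  · exact Prod.Lex.toLex_le_toLex.mpr (Or.inr ⟨rfl, Prod.Lex.toLex_le_toLex.mpr (by omega)⟩)

lemma level_eq_of_ldeVec_eq_zero {M : Matrix (Fin n) (Fin n) ℝ} (h : ldeVec (levelCol M) = 0) :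
    level M = toLex (levelJ M, toLex (0, 0)) := by
  unfold level
  split_ifs with h0 <;> simp_all

lemma level_eq_of_levelCol_eq {M N : Matrix (Fin n) (Fin n) ℝ} (σ : Equiv.Perm (Fin n))
    (hJ : levelJ N = levelJ M) (hcol : levelCol N = levelCol M ∘ σ) : level N = level M := by
  unfold level
  rw [hJ, hcol, ldeVec_comp_perm]
  congr 6
  exact Nat.card_congr (σ.subtypeEquiv fun _ => Iff.rfl)

theorem level_submatrix_le {t : ℕ} {σ : Equiv.Perm (Fin n)} (hσ : ∀ i : Fin n, t ≤ i → σ i = i)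
    (M : Matrix (Fin n) (Fin n) ℝ) :
    level (M.submatrix σ id) ≤ max (level M) (toLex (t, toLex (0, 0))) := by
  set N := M.submatrix σ id
  have hJ : levelJ N ≤ max (levelJ M) t := by
    refine csSup_le' ?_
    rintro _ ⟨i, rfl, x, hx⟩
    by_contra! h
    have hi : σ i = i := hσ i (by omega)
    have hσx : σ x = i ↔ x = i := ⟨fun h => σ.injective (h.trans hi.symm), fun h => h ▸ hi⟩
    exact hx (by simp [N, col_eq_of_levelJ_le (M := M) (i := i) (by omega), hσx])
  rcases lt_trichotomy (levelJ N) (levelJ M) with hlt | heq | hgt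
  · exact le_max_of_le_left (level_lt_of_levelJ_lt hlt).le
  · refine le_max_of_le_left (level_eq_of_levelCol_eq σ heq ?_).le
    funext x
    simp only [levelCol, heq, Function.comp_apply]
    split_ifs <;> rfl
  · refine le_max_of_le_right ?_
    have hint : ∀ x, inZsqrt2 (levelCol N x) := by
      intro x
      unfold levelCol
      split_ifs with h
      · have hM : levelJ M ≤ ((⟨levelJ N - 1, h⟩ : Fin n) : ℕ) := by simp only; omega
        simp only [N, submatrix_apply, id, col_eq_of_levelJ_le hM]
        split_ifs
        exacts [inZsqrt2_one, inZsqrt2_zero]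
      · exact inZsqrt2_zero
    rw [level_eq_of_ldeVec_eq_zero (ldeVec_eq_zero hint)]
    exact Prod.Lex.toLex_mono ⟨by omega, le_rfl⟩

lemma level_Xmat_mul_le {t : ℕ} {p q : Fin n} (hp : (p : ℕ) < t) (hq : (q : ℕ) < t)
    (M : Matrix (Fin n) (Fin n) ℝ) :
    level (Xmat n p q * M) ≤ max (level M) (toLex (t, toLex (0, 0))) := by
  rw [Xmat_mul]
  refine level_submatrix_le (fun i hi => Equiv.swap_apply_of_ne_of_ne ?_ ?_) M <;>
    exact Fin.ne_of_val_ne (by omega)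

lemma level_wsem_mul_le {t : ℕ} {u : List (Gen n)} (hu : ∀ x ∈ u, x.IsSwapBelow t)
    (M : Matrix (Fin n) (Fin n) ℝ) :
    level (wsem u * M) ≤ max (level M) (toLex (t, toLex (0, 0))) := by
  induction u with
  | nil => simp [wsem]
  | cons x u ih =>
    simp only [List.mem_cons, forall_eq_or_imp] at hu
    cases x with
    | X p q _ =>
      rw [wsem, Matrix.mul_assoc]
      exact (level_Xmat_mul_le hu.1.1 hu.1.2 _).trans
        (max_le (ih hu.2) (le_max_right _ _))
    | _ => exact hu.1.elim

lemma level_le_seqLevel (w : List (Gen n)) (s : Matrix (Fin n) (Fin n) ℝ) :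
    level s ≤ seqLevel w s := by
  induction w with
  | nil => exact le_rfl
  | cons g w ih => exact le_max_of_le_right ih

lemma level_wsem_mul_le_seqLevel (w : List (Gen n)) (s : Matrix (Fin n) (Fin n) ℝ) :
    level (wsem w * s) ≤ seqLevel w s := by
  cases w with
  | nil => simp [wsem, seqLevel]
  | cons g w => simp [wsem, seqLevel, Matrix.mul_assoc]

lemma seqLevel_append (u v : List (Gen n)) (s : Matrix (Fin n) (Fin n) ℝ) :
    seqLevel (u ++ v) s = max (seqLevel u (wsem v * s)) (seqLevel v s) := by
  induction u with
  | nil => exact (max_eq_right (level_wsem_mul_le_seqLevel v s)).symm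
  | cons g u ih => simp [seqLevel, ih, wsem_append, Matrix.mul_assoc, max_assoc]

lemma seqLevel_le {t : ℕ} {u : List (Gen n)} (hu : ∀ x ∈ u, x.IsSwapBelow t)
    (M : Matrix (Fin n) (Fin n) ℝ) :
    seqLevel u M ≤ max (level M) (toLex (t, toLex (0, 0))) := by
  induction u with
  | nil => exact le_max_left _ _
  | cons x u ih =>
    exact max_le (by simpa [wsem, Matrix.mul_assoc] using level_wsem_mul_le hu M)
      (ih fun y hy => hu y (List.mem_cons_of_mem x hy))

lemma toLex_le_level_of_le_levelJ {M : Matrix (Fin n) (Fin n) ℝ} {j : ℕ} (h : j ≤ levelJ M) :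
    toLex (j, toLex (0, 0)) ≤ level M :=
  le_trans (Prod.Lex.toLex_mono
    (show (j, toLex (0, 0)) ≤ (levelJ M, toLex (0, 0)) from ⟨h, le_rfl⟩)) (toLex_levelJ_le_level M)

/-- If `A` moves the `m`-th standard basis vector, then column `m` is not standard in `s` or
in `A * s`. -/
lemma toLex_le_max_level_mul {A : Matrix (Fin n) (Fin n) ℝ} {m x : Fin n}
    (hA : A x m ≠ if x = m then 1 else 0) (s : Matrix (Fin n) (Fin n) ℝ) :
    toLex ((m : ℕ) + 1, toLex (0, 0)) ≤ max (level s) (level (A * s)) := by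
  by_cases hs : ∀ y, s y m = if y = m then 1 else 0
  · have hAs : (A * s) x m = A x m := by simp [Matrix.mul_apply, hs]
    exact le_max_of_le_right (toLex_le_level_of_le_levelJ (le_levelJ (hAs ▸ hA)))
  · obtain ⟨y, hy⟩ := not_forall.mp hs
    exact le_max_of_le_left (toLex_le_level_of_le_levelJ (le_levelJ hy))

end Level

/-- `u g u⁻¹`: for a word `u` of swaps, `u.reverse` is its inverse. -/
def conjWord (u : List (Gen n)) (g : Gen n) : List (Gen n) := u ++ g :: u.reverse

/-- The intermediate states of `u g u⁻¹` are row permutations of `s` or of `r` by swaps. -/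
theorem seqLevel_conjWord {t : ℕ} {u : List (Gen n)} (hu : ∀ x ∈ u, x.IsSwapBelow t)
    (g : Gen n) (s : Matrix (Fin n) (Fin n) ℝ)
    (hT : toLex (t, toLex (0, 0)) ≤ max (level s) (level (wsem (conjWord u g) * s))) :
    seqLevel (conjWord u g) s = max (level s) (level (wsem (conjWord u g) * s)) := by
  set r := wsem (conjWord u g) * s
  set M := wsem (g :: u.reverse) * s
  have hu' : ∀ x ∈ u.reverse, x.IsSwapBelow t := by simpa using hu
  have hM : M = wsem u.reverse * r := by
    have hr : r = wsem u * M := by simp only [r, M, conjWord, wsem_append, Matrix.mul_assoc]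
    rw [hr, ← Matrix.mul_assoc, wsem_reverse_mul_self (fun x hx => (hu x hx).gsem_mul_self),
      Matrix.one_mul]
  have hsB : max (level s) (toLex (t, toLex (0, 0))) ≤ max (level s) (level r) :=
    max_le (le_max_left _ _) hT
  have hMB : level M ≤ max (level s) (level r) :=
    hM ▸ (level_wsem_mul_le hu' r).trans (max_le (le_max_right _ _) hT)
  refine le_antisymm ?_ (max_le (level_le_seqLevel _ s) (level_wsem_mul_le_seqLevel _ s))
  rw [conjWord, seqLevel_append, seqLevel]
  refine max_le ((seqLevel_le hu M).trans (max_le hMB hT))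
    (max_le ?_ ((seqLevel_le hu' s).trans hsB))
  simpa [M, wsem, Matrix.mul_assoc] using hMB

lemma WRel.append {u u' v v' : List (Gen n)} (hu : WRel n u u') (hv : WRel n v v') :
    WRel n (u ++ v) (u' ++ v') :=
  (hu.append_right v).trans (hv.append_left u')

lemma WRel.conj_left {p q : Fin n} {hpq : p ≠ q} {g g' : Gen n}
    (h : WRel n [g, Gen.X p q hpq] [Gen.X p q hpq, g']) :
    WRel n [Gen.X p q hpq, g, Gen.X p q hpq] [g'] :=
  (h.append_left [Gen.X p q hpq]).trans ((WRel.rel_xx p q hpq).append_right [g'])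

lemma WRel.conj_right {p q : Fin n} {hpq : p ≠ q} {g g' : Gen n}
    (h : WRel n [g, Gen.X p q hpq] [Gen.X p q hpq, g']) :
    WRel n [Gen.X p q hpq, g', Gen.X p q hpq] [g] :=
  (h.symm.append_right [Gen.X p q hpq]).trans ((WRel.rel_xx p q hpq).append_left [g])

def BasicConj (t : ℕ) (G : Gen n) : Prop :=
  ∃ u g, (∀ x ∈ u, x.IsSwapBelow t ∧ x.isBasic) ∧ g.isBasic ∧
    WRel n (conjWord u g) [G] ∧ wsem (conjWord u g) = gsem G

namespace BasicConj

lemma of_isBasic {t : ℕ} {g : Gen n} (hg : g.isBasic) : BasicConj t g :=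
  ⟨[], g, by simp, hg, WRel.refl _, by simp [conjWord, wsem]⟩

lemma swap_conj {t : ℕ} {G' : Gen n} (hG' : BasicConj t G') {z q : Fin n} (hz : (z : ℕ) = 0)
    (hq : (q : ℕ) < t) (hzq : z ≠ q) {G : Gen n}
    (hrel : WRel n (conjWord [Gen.X z q hzq] G') [G])
    (hsem : (gsem G').submatrix (Equiv.swap z q) (Equiv.swap z q) = gsem G) : BasicConj t G := by
  obtain ⟨u, g, hu, hg, hrel', hsem'⟩ := hG'
  have hx : (Gen.X z q hzq).IsSwapBelow t ∧ (Gen.X z q hzq).isBasic := ⟨⟨by omega, hq⟩, hz⟩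
  refine ⟨Gen.X z q hzq :: u, g, ?_, hg, ?_, ?_⟩
  · simpa using ⟨hx, hu⟩
  · refine WRel.trans ?_ hrel
    simpa [conjWord] using
      ((WRel.refl [Gen.X z q hzq]).append hrel').append (WRel.refl [Gen.X z q hzq])
  · rw [← hsem, ← hsem', ← Xmat_mul_mul_Xmat]
    simp [conjWord, wsem, wsem_append, gsem, Matrix.mul_assoc]

end BasicConj

lemma basicConj_Z (a : Fin n) : BasicConj (a + 1) (Gen.Z a) := by
  obtain ⟨z, hz⟩ : ∃ z : Fin n, (z : ℕ) = 0 := ⟨⟨0, a.pos⟩, rfl⟩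
  by_cases ha : (a : ℕ) = 0
  · exact .of_isBasic ha
  have hza : z ≠ a := Fin.ne_of_val_ne (by omega)
  refine (BasicConj.of_isBasic (g := Gen.Z z) hz).swap_conj hz (by omega) hza
    (WRel.rel_zx z a hza).conj_left ?_
  simp [gsem, Zmat_submatrix]

lemma basicConj_X {b c : Fin n} (hbc : b ≠ c) (hlt : b < c) :
    BasicConj (c + 1) (Gen.X b c hbc) := by
  obtain ⟨z, hz⟩ : ∃ z : Fin n, (z : ℕ) = 0 := ⟨⟨0, b.pos⟩, rfl⟩
  have hlt' : (b : ℕ) < c := hlt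
  have hzc : z ≠ c := Fin.ne_of_val_ne (by omega)
  have h0c : BasicConj (c + 1) (Gen.X z c hzc) := .of_isBasic hz
  by_cases hb : (b : ℕ) = 0
  · obtain rfl : b = z := Fin.ext (hb.trans hz.symm)
    exact h0c
  have hzb : z ≠ b := Fin.ne_of_val_ne (by omega)
  refine h0c.swap_conj hz (by omega) hzb (WRel.rel_xc2 z b c hzb hzc hbc).conj_right ?_
  simp [gsem, Xmat_submatrix, Equiv.swap_apply_of_ne_of_ne hzc.symm hbc.symm]

lemma basicConj_H_zero {z c : Fin n} (hz : (z : ℕ) = 0) (hzc : z ≠ c) :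
    BasicConj (c + 1) (Gen.H z c hzc) := by
  have hc : 1 ≤ (c : ℕ) := by have := Fin.val_ne_of_ne hzc; omega
  obtain ⟨o, ho⟩ : ∃ o : Fin n, (o : ℕ) = 1 := ⟨⟨1, by omega⟩, rfl⟩
  have hzo : z ≠ o := Fin.ne_of_val_ne (by omega)
  have h01 : BasicConj (c + 1) (Gen.H z o hzo) := .of_isBasic ⟨hz, ho⟩
  by_cases hc1 : (c : ℕ) = 1
  · obtain rfl : o = c := Fin.ext (ho.trans hc1.symm)
    exact h01
  have hoc : o ≠ c := Fin.ne_of_val_ne (by omega)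
  have h10 : BasicConj (c + 1) (Gen.H o z hzo.symm) :=
    h01.swap_conj hz (by omega) hzo (WRel.rel_h_swap z o hzo).symm
      (by simp [gsem, Hmat_submatrix])
  have h1c : BasicConj (c + 1) (Gen.H o c hoc) :=
    h10.swap_conj hz (by omega) hzc (WRel.rel_hx5 o z c hzo.symm hoc hzc).conj_right
      (by simp [gsem, Hmat_submatrix, Equiv.swap_apply_of_ne_of_ne hzo.symm hoc])
  exact h1c.swap_conj hz (by omega) hzo (WRel.rel_hx4 z o c hzo hzc hoc).conj_left
    (by simp [gsem, Hmat_submatrix, Equiv.swap_apply_of_ne_of_ne hzc.symm hoc.symm])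

lemma basicConj_H {b c : Fin n} (hbc : b ≠ c) (hlt : b < c) :
    BasicConj (c + 1) (Gen.H b c hbc) := by
  obtain ⟨z, hz⟩ : ∃ z : Fin n, (z : ℕ) = 0 := ⟨⟨0, b.pos⟩, rfl⟩
  have hlt' : (b : ℕ) < c := hlt
  have hzc : z ≠ c := Fin.ne_of_val_ne (by omega)
  by_cases hb : (b : ℕ) = 0
  · obtain rfl : b = z := Fin.ext (hb.trans hz.symm)
    exact basicConj_H_zero hz hbc
  have hzb : z ≠ b := Fin.ne_of_val_ne (by omega)
  exact (basicConj_H_zero hz hzc).swap_conj hz (by omega) hzb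
    (WRel.rel_hx4 z b c hzb hzc hbc).conj_right
    (by simp [gsem, Hmat_submatrix, Equiv.swap_apply_of_ne_of_ne hzc.symm hbc.symm])

lemma Gen.exists_basicConj (G : Gen n) (hG : G.ordered) :
    ∃ m : Fin n, (∃ x, gsem G x m ≠ if x = m then 1 else 0) ∧ BasicConj (m + 1) G := by
  cases G with
  | Z a => exact ⟨a, ⟨a, by norm_num [gsem, Zmat]⟩, basicConj_Z a⟩
  | X b c hbc => exact ⟨c, ⟨b, by simp [gsem, Xmat, hbc]⟩, basicConj_X hbc hG⟩
  | H b c hbc => exact ⟨c, ⟨b, by simp [gsem, Hmat, hbc]⟩, basicConj_H hbc hG⟩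

end

theorem simple_to_basic_general (n : ℕ) (s r : Matrix (Fin n) (Fin n) ℝ)
    (G : Gen n) (hG : G.ordered) (hr : r = gsem G * s) :
    ∃ w : List (Gen n), (∀ g ∈ w, g.isBasic) ∧ WRel n w [G] ∧
      seqLevel w s = max (level s) (level r) := by
  obtain ⟨m, ⟨x, hx⟩, u, g, hu, hg, hrel, hsem⟩ := G.exists_basicConj hG
  refine ⟨conjWord u g, ?_, hrel, ?_⟩
  · simp only [conjWord, List.mem_append, List.mem_cons, List.mem_reverse]
    rintro y (hy | rfl | hy)
    exacts [(hu y hy).2, hg, (hu y hy).2]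
  · rw [hr, ← hsem]
    exact seqLevel_conjWord (fun y hy => (hu y hy).1) g s (hsem ▸ toLex_le_max_level_mul hx s)

theorem simple_to_basic (n : ℕ) (hn : 1 ≤ n) (s r : Matrix (Fin n) (Fin n) ℝ)
    (hso : s * sᵀ = 1) (hse : ∀ i j, inZinvsqrt2 (s i j))
    (hro : r * rᵀ = 1) (hre : ∀ i j, inZinvsqrt2 (r i j))
    (G : Gen n) (hG : G.ordered) (hr : r = gsem G * s) :
    ∃ w : List (Gen n), (∀ g ∈ w, g.isBasic) ∧ WRel n w [G] ∧
      seqLevel w s = max (level s) (level r) :=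
  simple_to_basic_general n s r G hG hr
end
end
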